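/- arXiv:2602.05866 — 5 statements merged into one kernel-verified Lean document; each statement's English description precedes it below -/
import Mathlib

section
/- Let T be a complete theory with quantifier elimination in a relational language L containing a unary predicate P, and let M̄ be a model of T. Then any elementary substructure N of the induced L-substructure M̄^P on P(M̄) is complete in M̄: for every L-formula φ(x) with parameters from N, if M̄ satisfies ∃x (P(x) ∧ φ(x)), then there is b ∈ P(N) such that M̄ ⊨ φ(b). -/
open FirstOrder FirstOrder.Language FirstOrder.Language.Structure

universe u v

namespace RelCatPaper

variable {L : FirstOrder.Language.{u, v}}

/-- The language is relational: no function symbols. -/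
def Relational (L : FirstOrder.Language.{u, v}) : Prop := ∀ n, IsEmpty (L.Functions n)

/-- `T` has quantifier elimination. -/
def HasQE (T : L.Theory) : Prop :=
  ∀ (n : ℕ) (φ : L.Formula (Fin n)), ∃ ψ : L.Formula (Fin n), ψ.IsQF ∧
    ∀ (M : Type (max u v)) [L.Structure M], M ⊨ T →
      ∀ v : Fin n → M, φ.Realize v ↔ ψ.Realize v

variable (p : L.Relations 1)

/-- The set of realizations of the distinguished unary predicate `p` in `M`. -/
def Pset (M : Type*) [L.Structure M] : Set M := {x | RelMap p ![x]}

/-- The `P`-part of `M` as a substructure (the language being relational). -/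
def Psub (hrel : Relational L) (M : Type*) [L.Structure M] : L.Substructure M :=
  ⟨Pset p M, fun {n} f => (hrel n).elim f⟩

/-- `T` says that `P` is infinite. -/
def PInfinite (T : L.Theory) : Prop :=
  ∀ (M : Type (max u v)) [L.Structure M], M ⊨ T → (Pset p M).Infinite

/-- A subset `A` of `M` is *complete*: any formula over `A` realized by an element of `P`
is realized by an element of `P ∩ A`. -/
def CompleteSet (M : Type*) [L.Structure M] (A : Set M) : Prop :=
  ∀ (n : ℕ) (φ : L.Formula (Fin 1 ⊕ Fin n)) (c : Fin n → M), (∀ i, c i ∈ A) →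
    (∃ x : M, x ∈ Pset p M ∧ φ.Realize (Sum.elim (fun _ => x) c)) →
    ∃ b : M, b ∈ A ∧ b ∈ Pset p M ∧ φ.Realize (Sum.elim (fun _ => b) c)

/-- `tp(a/P(M))` is isolated (by a formula over `P(M)`). -/
def IsolatedOverP (M : Type*) [L.Structure M] {m : ℕ} (a : Fin m → M) : Prop :=
  ∃ (n : ℕ) (φ : L.Formula (Fin m ⊕ Fin n)) (c : Fin n → M),
    (∀ i, c i ∈ Pset p M) ∧ φ.Realize (Sum.elim a c) ∧
    ∀ (k : ℕ) (ψ : L.Formula (Fin m ⊕ Fin k)) (d : Fin k → M), (∀ i, d i ∈ Pset p M) →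
      ψ.Realize (Sum.elim a d) →
      ∀ a' : Fin m → M, φ.Realize (Sum.elim a' c) → ψ.Realize (Sum.elim a' d)

/-- `M` is atomic over its `P`-part. -/
def AtomicOverP (M : Type*) [L.Structure M] : Prop :=
  ∀ (m : ℕ) (a : Fin m → M), IsolatedOverP p M a

/-- `T` is relatively `(ω,ω)`-categorical. -/
def RelativelyCatCC (hrel : Relational L) (T : L.Theory) : Prop :=
  ∀ (M₁ M₂ : Type (max u v)) [L.Structure M₁] [L.Structure M₂],
    M₁ ⊨ T → M₂ ⊨ T → Countable M₁ → Countable M₂ →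
    ∀ f : (Psub p hrel M₁) ≃[L] (Psub p hrel M₂),
      ∃ g : M₁ ≃[L] M₂, ∀ x : Psub p hrel M₁, g (x : M₁) = (f x : M₂)

/-- `T` is relatively `ω`-categorical (the `P`-parts are countable). -/
def RelativelyCatOmega (hrel : Relational L) (T : L.Theory) : Prop :=
  ∀ (M₁ M₂ : Type (max u v)) [L.Structure M₁] [L.Structure M₂],
    M₁ ⊨ T → M₂ ⊨ T → Countable (Psub p hrel M₁) → Countable (Psub p hrel M₂) →
    ∀ f : (Psub p hrel M₁) ≃[L] (Psub p hrel M₂),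
      ∃ g : M₁ ≃[L] M₂, ∀ x : Psub p hrel M₁, g (x : M₁) = (f x : M₂)

/-- `T` is relatively categorical. -/
def RelativelyCat (hrel : Relational L) (T : L.Theory) : Prop :=
  ∀ (M₁ M₂ : Type (max u v)) [L.Structure M₁] [L.Structure M₂],
    M₁ ⊨ T → M₂ ⊨ T →
    ∀ f : (Psub p hrel M₁) ≃[L] (Psub p hrel M₂),
      ∃ g : M₁ ≃[L] M₂, ∀ x : Psub p hrel M₁, g (x : M₁) = (f x : M₂)

/-- `TP` is the common complete theory of the `P`-parts of models of `T`. -/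
def IsPTheory (hrel : Relational L) (T TP : L.Theory) : Prop :=
  TP.IsComplete ∧
    ∀ (M : Type (max u v)) [L.Structure M], M ⊨ T → (Psub p hrel M : Type (max u v)) ⊨ TP

/-- `x` is algebraic over `A` in `M`. -/
def InAcl (M : Type*) [L.Structure M] (A : Set M) (x : M) : Prop :=
  ∃ (n : ℕ) (φ : L.Formula (Fin 1 ⊕ Fin n)) (c : Fin n → M), (∀ i, c i ∈ A) ∧
    φ.Realize (Sum.elim (fun _ => x) c) ∧
    {y : M | φ.Realize (Sum.elim (fun _ => y) c)}.Finite

/-- `M` is almost internal to `P`: `M ⊆ acl(P(M) ∪ a)` for some finite tuple `a`. -/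
def AlmostInternal (M : Type*) [L.Structure M] : Prop :=
  ∃ (m : ℕ) (a : Fin m → M), ∀ x : M, InAcl (L := L) M (Pset p M ∪ Set.range a) x

/-- `M` is `1`-coanalyzable in `P`: there is a definable relation `R ⊆ M × P^ℓ`
projecting onto `M` with all fibers over tuples from `P` finite. -/
def OneCoanalyzable (M : Type*) [L.Structure M] : Prop :=
  ∃ (ℓ n : ℕ) (φ : L.Formula ((Fin 1 ⊕ Fin ℓ) ⊕ Fin n)) (e : Fin n → M),
    (∀ x : M, ∃ c : Fin ℓ → M, (∀ i, c i ∈ Pset p M) ∧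
      φ.Realize (Sum.elim (Sum.elim (fun _ => x) c) e)) ∧
    ∀ c : Fin ℓ → M, (∀ i, c i ∈ Pset p M) →
      {x : M | φ.Realize (Sum.elim (Sum.elim (fun _ => x) c) e)}.Finite

/-- `M` is saturated: every finitely realized set of formulas in one variable over fewer
than `#M` parameters is realized. -/
def IsSaturated (M : Type w) [L.Structure M] : Prop :=
  ∀ (ι : Type w), Cardinal.mk ι < Cardinal.mk M → ∀ (c : ι → M)
    (Φ : Set (L.Formula (Fin 1 ⊕ ι))),
    (∀ Φ₀ : Finset (L.Formula (Fin 1 ⊕ ι)), ↑Φ₀ ⊆ Φ →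
      ∃ x : M, ∀ φ ∈ Φ₀, Formula.Realize φ (Sum.elim (fun _ => x) c)) →
    ∃ x : M, ∀ φ ∈ Φ, Formula.Realize φ (Sum.elim (fun _ => x) c)

/-- Types over the `P`-part are uniformly definable (stable embeddedness of `P`). -/
def StablyEmbedded (T : L.Theory) : Prop :=
  ∀ (m k : ℕ) (ψ : L.Formula (Fin m ⊕ Fin k)),
    ∃ (n : ℕ) (χ : L.Formula (Fin k ⊕ Fin n)),
      ∀ (M : Type (max u v)) [L.Structure M], M ⊨ T →
        ∀ a : Fin m → M, ∃ c : Fin n → M, (∀ i, c i ∈ Pset p M) ∧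
          ∀ b : Fin k → M, (∀ i, b i ∈ Pset p M) →
            (ψ.Realize (Sum.elim a b) ↔ χ.Realize (Sum.elim b c))


/-- `M` is `ℵ₁`-saturated (countably saturated). -/
def CountablySaturated (M : Type w) [L.Structure M] : Prop :=
  ∀ (c : ℕ → M) (Φ : Set (L.Formula (Fin 1 ⊕ ℕ))),
    (∀ Φ₀ : Finset (L.Formula (Fin 1 ⊕ ℕ)), ↑Φ₀ ⊆ Φ →
      ∃ x : M, ∀ φ ∈ Φ₀, Formula.Realize φ (Sum.elim (fun _ => x) c)) →
    ∃ x : M, ∀ φ ∈ Φ, Formula.Realize φ (Sum.elim (fun _ => x) c)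

/-- `(T,P)` is `1`-cardinal: every model of `T` has the same cardinality as its `P`-part. -/
def OneCardinal (T : L.Theory) : Prop :=
  ∀ (M : Type (max u v)) [L.Structure M], M ⊨ T → Cardinal.mk M = Cardinal.mk (Pset p M)


section Helpers

variable {M : Type*} {N' : Type*} [L.Structure M] [L.Structure N']

/-- QF formulas transfer along embeddings. -/
lemma qf_realize_embedding {α : Type*} {ψ : L.Formula α} (h : ψ.IsQF)
    (f : M ↪[L] N') (w : α → M) :
    ψ.Realize (⇑f ∘ w) ↔ ψ.Realize w := by
  have := h.realize_embedding f (v := w) (xs := (default : Fin 0 → M))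
  rwa [Subsingleton.elim (⇑f ∘ (default : Fin 0 → M)) default] at this

/-- Realization of the existential closure in the first variable. -/
lemma realize_exFormula {n : ℕ} (ψ : L.Formula (Fin 1 ⊕ Fin n)) (w : Fin n → M) :
    Formula.Realize
      ((BoundedFormula.relabel (Sum.elim (fun _ => Sum.inr 0) Sum.inl) ψ).ex) w
      ↔ ∃ a : M, ψ.Realize (Sum.elim (fun _ => a) w) := by
  rw [Formula.Realize, BoundedFormula.realize_ex]
  refine exists_congr fun a => ?_
  rw [BoundedFormula.realize_relabel]
  have h1 : (Sum.elim w ((Fin.snoc default a : Fin (1+0) → M) ∘ Fin.castAdd 0)) ∘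
      (Sum.elim (fun _ => Sum.inr 0) Sum.inl : Fin 1 ⊕ Fin n → Fin n ⊕ Fin 1)
      = Sum.elim (fun _ => a) w := by
    funext i
    rcases i with i | i
    · simp [Fin.snoc]
    · simp
  rw [h1]
  exact iff_of_eq (congrArg _ (Subsingleton.elim _ _))

end Helpers

/-- any elementary substructure of the P-part of a model of T is complete. -/
theorem elementarySubstructure_of_PPart_complete
    {L : FirstOrder.Language.{u, v}} (p : L.Relations 1) (hrel : Relational L)
    (T : L.Theory) (hcomp : T.IsComplete) (hqe : HasQE T) (hinf : PInfinite p T)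
    (Mbar : Type (max u v)) [L.Structure Mbar] (hMbar : Mbar ⊨ T)
    (N : L.ElementarySubstructure (Psub p hrel Mbar)) :
    CompleteSet p Mbar (Subtype.val '' (N : Set (Psub p hrel Mbar))) := by
  classical
  intro n φ c hc hex
  obtain ⟨ψ₀, hψ₀QF, hψ₀⟩ := hqe (1 + n) (φ.relabel ⇑finSumFinEquiv)
  set ψ : L.Formula (Fin 1 ⊕ Fin n) := ψ₀.relabel ⇑finSumFinEquiv.symm with hψdef
  have hψQF : BoundedFormula.IsQF ψ := hψ₀QF.relabel _
  have key : ∀ (M : Type (max u v)) [L.Structure M], M ⊨ T →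
      ∀ w : Fin 1 ⊕ Fin n → M, φ.Realize w ↔ ψ.Realize w := by
    intro M _ hM w
    have h2 := hψ₀ M hM (w ∘ ⇑finSumFinEquiv.symm)
    rw [Formula.realize_relabel] at h2
    rw [hψdef, Formula.realize_relabel]
    have h3 : (w ∘ ⇑finSumFinEquiv.symm) ∘ ⇑finSumFinEquiv = w := by
      funext i; simp
    rwa [h3] at h2
  obtain ⟨x, hxP, hφx⟩ := hex
  have hψx : ψ.Realize (Sum.elim (fun _ => x) c) := (key Mbar hMbar _).mp hφx
  choose cP hcPmem hcPval using hc
  let S := Psub p hrel Mbar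
  let xP : S := ⟨x, hxP⟩
  have hcomp1 : (⇑(Substructure.subtype S)) ∘ (Sum.elim (fun _ : Fin 1 => xP) cP)
      = Sum.elim (fun _ => x) c := by
    funext i; rcases i with i | i
    · rfl
    · exact hcPval i
  have hψS : ψ.Realize (Sum.elim (fun _ : Fin 1 => xP) cP) := by
    rw [← qf_realize_embedding hψQF (Substructure.subtype S), hcomp1]
    exact hψx
  set θ : L.Formula (Fin n) :=
    (BoundedFormula.relabel (Sum.elim (fun _ => Sum.inr 0) Sum.inl) ψ).ex with hθdef
  have hθS : θ.Realize cP := (realize_exFormula ψ cP).mpr ⟨xP, hψS⟩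
  set cN : Fin n → N := fun i => ⟨cP i, hcPmem i⟩ with hcNdef
  have hcN : (⇑N.subtype) ∘ cN = cP := by funext i; rfl
  have hθN : θ.Realize cN := (N.subtype.map_formula θ cN).mp (by rw [hcN]; exact hθS)
  obtain ⟨bN, hbN⟩ := (realize_exFormula ψ cN).mp hθN
  have hψS' : ψ.Realize (Sum.elim (fun _ => (bN : S)) cP) := by
    have h4 := (N.subtype.map_formula ψ (Sum.elim (fun _ => bN) cN)).mpr hbN
    have h5 : (⇑N.subtype) ∘ (Sum.elim (fun _ : Fin 1 => bN) cN)
        = Sum.elim (fun _ => (bN : S)) cP := by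
      funext i; rcases i with i | i <;> rfl
    rwa [h5] at h4
  have hψM : ψ.Realize (Sum.elim (fun _ => ((bN : S) : Mbar)) c) := by
    have h6 := (qf_realize_embedding hψQF (Substructure.subtype S)
      (Sum.elim (fun _ => (bN : S)) cP)).mpr hψS'
    have h7 : (⇑(Substructure.subtype S)) ∘ (Sum.elim (fun _ : Fin 1 => (bN : S)) cP)
        = Sum.elim (fun _ => ((bN : S) : Mbar)) c := by
      funext i; rcases i with i | i
      · rfl
      · exact hcPval i
    rwa [h7] at h6
  exact ⟨((bN : S) : Mbar), ⟨(bN : S), bN.2, rfl⟩, (bN : S).2,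
    (key Mbar hMbar _).mpr hψM⟩


end RelCatPaper
end

section
/- Let T be a complete theory with quantifier elimination in a countable relational language with unary predicate P, and let M̄ be a saturated (or just sufficiently saturated/countably saturated) model of T. If A ⊆ M̄ is a countable complete set, then there is a countable elementary substructure M of M̄ such that A ⊆ M and P(M) = P(M̄) ∩ A. -/
open FirstOrder FirstOrder.Language FirstOrder.Language.Structure

universe u v

namespace RelCatPaper

variable {L : FirstOrder.Language.{u, v}}

variable (p : L.Relations 1)

/-!
Omitting types inside the saturated model. Conditions are nonempty `A`-definable sets of
sequences `b : ℕ → M`. A condition can be shrunk so that a prescribed coordinate is either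
outside `P` or equal to an element of `P ∩ A` (the projection of the condition to that
coordinate is `A`-definable and meets `P`, so by completeness it meets `P ∩ A`), and so that a
prescribed formula over `A ∪ range b` that has a solution has one among the coordinates of `b`
(a coordinate the condition does not mention can be chosen freely). By Rasiowa–Sikorski,
countably many such shrinkings give a descending chain of conditions, and countable saturation,
applied one coordinate at a time, yields a sequence `b` in all of them. Then `A ∪ range b`
meets every nonempty set definable over it, so it is an elementary substructure by the
Tarski–Vaught test, and its `P`-part is that of `A`.
-/

section

variable {M : Type*} [L.Structure M] {A : Set M}

theorem _root_.FirstOrder.Language.Formula.realize_relabel_sumElim {α β γ : Type*}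
    (φ : L.Formula (α ⊕ β)) (g : α → γ) (c : γ → M) (v : β → M) :
    (φ.relabel (Sum.elim (Sum.inr ∘ g) Sum.inl)).Realize (Sum.elim v c) ↔
      φ.Realize (Sum.elim (c ∘ g) v) := by
  rw [Formula.realize_relabel]
  congr! 1
  ext (a | b) <;> rfl

theorem _root_.Set.Definable.exists_finite_restrict {β : Type*} {X : Set (β → M)}
    (h : A.Definable L X) :
    ∃ G : Set β, G.Finite ∧ ∀ H : Set β, G ⊆ H →
      ∃ Y : Set (H → M), A.Definable L Y ∧ ∀ b, b ∈ X ↔ b ∘ (↑) ∈ Y := by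
  classical
  obtain ⟨φ, rfl⟩ := Set.definable_iff_exists_formula_sum.1 h
  refine ⟨φ.freeVarFinset.toRight, Finset.finite_toSet _, fun H hGH => ?_⟩
  let ψ : L.Formula (A ⊕ H) := φ.restrictFreeVar fun x =>
    Sum.casesOn (motive := fun y => y ∈ φ.freeVarFinset → A ⊕ H) x.1
      (fun a _ => Sum.inl a) (fun i hi => Sum.inr ⟨i, hGH (Finset.mem_toRight.2 hi)⟩) x.2
  refine ⟨{u | ψ.Realize (Sum.elim (↑) u)}, Set.definable_iff_exists_formula_sum.2 ⟨ψ, rfl⟩,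
    fun b => ?_⟩
  exact (BoundedFormula.realize_restrictFreeVar _ (by rintro ⟨a | i, _⟩ <;> rfl)).symm

theorem _root_.Set.Definable.exists_finite_support {β : Type*} {X : Set (β → M)}
    (h : A.Definable L X) :
    ∃ G : Set β, G.Finite ∧ ∀ b b', Set.EqOn b b' G → (b ∈ X ↔ b' ∈ X) := by
  obtain ⟨G, hG, hY⟩ := h.exists_finite_restrict
  obtain ⟨Y, -, hXY⟩ := hY G subset_rfl
  refine ⟨G, hG, fun b b' hbb' => ?_⟩
  rw [hXY, hXY, show b ∘ (↑) = b' ∘ ((↑) : G → β) from funext fun i => hbb' i.2]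

theorem _root_.Set.Definable.image_comp_of_nonempty [Nonempty M] {α β : Type*} [Finite α]
    {X : Set (β → M)} (h : A.Definable L X) (f : α → β) :
    A.Definable L ((fun b => b ∘ f) '' X) := by
  classical
  obtain ⟨G, hG, hY⟩ := h.exists_finite_restrict
  let H := G ∪ Set.range f
  have : Finite H := (hG.union (Set.finite_range f)).to_subtype
  obtain ⟨Y, hYdef, hXY⟩ := hY H Set.subset_union_left
  let f' : α → H := fun a => ⟨f a, Or.inr ⟨a, rfl⟩⟩
  convert hYdef.image_comp f' using 1
  ext u
  constructor
  · rintro ⟨b, hb, rfl⟩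
    exact ⟨b ∘ (↑), (hXY b).1 hb, rfl⟩
  · rintro ⟨w, hw, rfl⟩
    let b : β → M := fun i => if hi : i ∈ H then w ⟨i, hi⟩ else Classical.arbitrary M
    have hbw : b ∘ (↑) = w := funext fun i => dif_pos i.2
    exact ⟨b, (hXY b).2 (hbw ▸ hw), by rw [← hbw]; rfl⟩

theorem _root_.Set.Definable.exists_eq_preimage_sumElim {α β : Type*} {b : β → M}
    {s : Set (α → M)} (h : (A ∪ Set.range b).Definable L s) :
    ∃ R : Set ((β ⊕ α) → M), A.Definable L R ∧ s = {v | Sum.elim b v ∈ R} := by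
  obtain ⟨φ, rfl⟩ := Set.definable_iff_exists_formula_sum.1 h
  have hname : ∀ c : ↥(A ∪ Set.range b), ∃ y : A ⊕ β, Sum.elim (↑) b y = (c : M) := by
    rintro ⟨c, hc | ⟨i, rfl⟩⟩
    exacts [⟨Sum.inl ⟨c, hc⟩, rfl⟩, ⟨Sum.inr i, rfl⟩]
  choose g hg using hname
  let σ : ↥(A ∪ Set.range b) ⊕ α → A ⊕ (β ⊕ α) :=
    Sum.elim (Sum.map id Sum.inl ∘ g) (Sum.inr ∘ Sum.inr)
  refine ⟨{w | (φ.relabel σ).Realize (Sum.elim (↑) w)},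
    Set.definable_iff_exists_formula_sum.2 ⟨_, rfl⟩, ?_⟩
  ext v
  simp only [Set.mem_ofPred_eq, Formula.realize_relabel]
  congr! 1
  ext (c | a)
  · show (c : M) = _
    rw [← hg c]
    simp only [Function.comp_apply, Sum.elim_inl, σ]
    cases g c <;> rfl
  · rfl

theorem _root_.Set.Definable₁.preimage_eval {β : Type*} {D : Set M} (hD : A.Definable₁ L D)
    (j : β) : A.Definable L {b : β → M | b j ∈ D} :=
  hD.preimage_comp fun _ => j

theorem _root_.Set.countable_setOf_definable [Countable L.Symbols] {α : Type*} [Countable α]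
    (hA : A.Countable) : {s : Set (α → M) | A.Definable L s}.Countable := by
  have := hA.to_subtype
  refine (Set.countable_range fun φ : L[[A]].Formula α => Set.ofPred φ.Realize).mono ?_
  rintro s ⟨φ, hφ⟩
  exact ⟨φ, hφ.symm⟩

theorem CountablySaturated.iInter_nonempty (hsat : CountablySaturated (L := L) M) {B : Set M}
    (hB : B.Countable) {D : ℕ → Set (Fin 1 → M)} (hdef : ∀ n, B.Definable L (D n))
    (hanti : Antitone D) (hne : ∀ n, (D n).Nonempty) : (⋂ n, D n).Nonempty := by
  classical
  choose φ hφ using fun n => Set.definable_iff_exists_formula_sum.1 (hdef n)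
  have := hB.to_subtype
  obtain ⟨g, hg⟩ := Countable.exists_injective_nat B
  obtain ⟨v₀, -⟩ := hne 0
  let c : ℕ → M := Function.extend g (↑) fun _ => v₀ 0
  let ψ n : L.Formula (Fin 1 ⊕ ℕ) := (φ n).relabel (Sum.elim (Sum.inr ∘ g) Sum.inl)
  have hψ n (x : M) : (ψ n).Realize (Sum.elim (fun _ => x) c) ↔ (fun _ => x) ∈ D n := by
    have hcg : c ∘ g = (↑) := funext fun b => by simp only [c, Function.comp_apply, hg.extend_apply]
    rw [Formula.realize_relabel_sumElim, hcg, hφ n]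
    rfl
  have hconst (v : Fin 1 → M) : (fun _ => v 0) = v := funext fun i => by rw [Fin.fin_one_eq_zero i]
  obtain ⟨x, hx⟩ := hsat c (Set.range ψ) fun Φ₀ hΦ₀ => by
    obtain ⟨t, -, rfl⟩ := Finset.subset_set_image_iff.1 (Set.image_univ ▸ hΦ₀)
    obtain ⟨v, hv⟩ := hne (t.sup id)
    refine ⟨v 0, fun φ hφt => ?_⟩
    obtain ⟨n, hn, rfl⟩ := Finset.mem_image.1 hφt
    rw [hψ, hconst]
    exact hanti (Finset.le_sup (f := id) hn) hv
  exact ⟨fun _ => x, Set.mem_iInter.2 fun n => (hψ n x).1 (hx _ ⟨n, rfl⟩)⟩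

theorem CountablySaturated.exists_extend_prefix (hsat : CountablySaturated (L := L) M)
    (hA : A.Countable) {X : ℕ → Set (ℕ → M)} (hdef : ∀ n, A.Definable L (X n))
    (hanti : Antitone X) {k : ℕ} {v : ℕ → M}
    (hv : ∀ n, ∃ b ∈ X n, ∀ i < k, b i = v i) :
    ∃ x, ∀ n, ∃ b ∈ X n, ∀ i < k + 1, b i = Function.update v k x i := by
  have : Nonempty M := ⟨v 0⟩
  let E : Set (ℕ → M) := {b | ∀ i < k, b i = v i}
  have hE : (A ∪ Set.range v).Definable L E := by
    convert Set.definable_biInter_finset (fun i => (Set.Definable.singleton_of_mem (L := L)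
      (Set.mem_union_right A (Set.mem_range_self i))).preimage_eval i) (Finset.range k) using 1
    ext b
    simp [E]
  let D n : Set (Fin 1 → M) := (fun b => b ∘ fun _ => k) '' (X n ∩ E)
  obtain ⟨u, hu⟩ := hsat.iInter_nonempty (hA.union (Set.countable_range v))
    (D := D) (fun n => (((hdef n).mono Set.subset_union_left).inter hE).image_comp_of_nonempty _)
    (fun m n hmn => Set.image_mono (Set.inter_subset_inter_left _ (hanti hmn)))
    fun n => by
      obtain ⟨b, hbX, hbE⟩ := hv n
      exact ⟨_, b, ⟨hbX, hbE⟩, rfl⟩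
  refine ⟨u 0, fun n => ?_⟩
  obtain ⟨b, ⟨hbX, hbE⟩, hbu⟩ := Set.mem_iInter.1 hu n
  refine ⟨b, hbX, fun i hi => ?_⟩
  rcases Nat.lt_succ_iff_lt_or_eq.1 hi with hik | rfl
  · rw [Function.update_of_ne hik.ne]
    exact hbE i hik
  · rw [Function.update_self, ← hbu]
    rfl

theorem CountablySaturated.iInter_nonempty_of_nat_vars (hsat : CountablySaturated (L := L) M)
    (hA : A.Countable) {X : ℕ → Set (ℕ → M)} (hdef : ∀ n, A.Definable L (X n))
    (hanti : Antitone X) (hne : ∀ n, (X n).Nonempty) : (⋂ n, X n).Nonempty := by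
  obtain ⟨b₀, -⟩ := hne 0
  have hstep k v : ∃ x, (∀ n, ∃ b ∈ X n, ∀ i < k, b i = v i) →
      ∀ n, ∃ b ∈ X n, ∀ i < k + 1, b i = Function.update v k x i := by
    by_cases hv : ∀ n, ∃ b ∈ X n, ∀ i < k, b i = v i
    · exact (hsat.exists_extend_prefix hA hdef hanti hv).imp fun _ h _ => h
    · exact ⟨b₀ 0, fun h => absurd h hv⟩
  choose F hF using hstep
  let w : ℕ → ℕ → M := fun k => Nat.rec b₀ (fun k w => Function.update w k (F k w)) k
  have hw k : ∀ n, ∃ b ∈ X n, ∀ i < k, b i = w k i := by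
    induction k with
    | zero => exact fun n => (hne n).imp fun b hb => ⟨hb, fun i hi => absurd hi i.not_lt_zero⟩
    | succ k ih => exact hF k (w k) ih
  let b : ℕ → M := fun i => w (i + 1) i
  have hwb k : ∀ i < k, w k i = b i := by
    induction k with
    | zero => exact fun i hi => absurd hi i.not_lt_zero
    | succ k ih =>
      intro i hi
      rcases Nat.lt_succ_iff_lt_or_eq.1 hi with hik | rfl
      · exact (Function.update_of_ne hik.ne _ _).trans (ih i hik)
      · rfl
  refine ⟨b, Set.mem_iInter.2 fun n => ?_⟩
  obtain ⟨G, hG, hsupp⟩ := (hdef n).exists_finite_support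
  obtain ⟨k, hk⟩ := hG.bddAbove
  obtain ⟨b', hb'X, hb'w⟩ := hw (k + 1) n
  exact (hsupp b' b fun i hi =>
    (hb'w i (Nat.lt_succ_of_le (hk hi))).trans (hwb _ i (Nat.lt_succ_of_le (hk hi)))).1 hb'X

theorem definable₁_pset : A.Definable₁ L (Pset p M) := by
  refine (Set.empty_definable_iff.2 ⟨p.formula₁ (Term.var 0), ?_⟩).mono (Set.empty_subset A)
  ext u
  simp only [Set.mem_ofPred_eq, Formula.realize_rel₁, Term.realize_var, Pset]

variable {p}

theorem CompleteSet.exists_mem_of_definable (hA : CompleteSet p M A) {D : Set (Fin 1 → M)}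
    (hD : A.Definable L D) {x : M} (hxP : x ∈ Pset p M) (hxD : (fun _ => x) ∈ D) :
    ∃ a ∈ A, a ∈ Pset p M ∧ (fun _ => a) ∈ D := by
  obtain ⟨A₀, hA₀, hD₀⟩ := Set.definable_iff_finitely_definable.1 hD
  obtain ⟨φ, rfl⟩ := Set.definable_iff_exists_formula_sum.1 hD₀
  obtain ⟨n, ⟨e⟩⟩ := Finite.exists_equiv_fin (A₀ : Set M)
  let c : Fin n → M := (↑) ∘ e.symm
  have hce : c ∘ e = (↑) := funext fun a => congrArg Subtype.val (e.symm_apply_apply a)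
  have hφ (y : M) : (φ.relabel (Sum.elim (Sum.inr ∘ e) Sum.inl)).Realize
      (Sum.elim (fun _ => y) c) ↔ (fun _ => y) ∈ {v | φ.Realize (Sum.elim (↑) v)} := by
    rw [Formula.realize_relabel_sumElim, hce]
    rfl
  obtain ⟨a, haA, haP, ha⟩ := hA n _ c (fun i => hA₀ (e.symm i).2) ⟨x, hxP, (hφ x).2 hxD⟩
  exact ⟨a, haA, haP, (hφ a).1 ha⟩

theorem exists_definable_subset_forall_mem_of_mem_pset (hA : CompleteSet p M A)
    {X : Set (ℕ → M)} (hX : A.Definable L X) (hne : X.Nonempty) (j : ℕ) :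
    ∃ Y ⊆ X, A.Definable L Y ∧ Y.Nonempty ∧ ∀ b ∈ Y, b j ∈ Pset p M → b j ∈ A := by
  by_cases hout : (X ∩ {b | b j ∈ (Pset p M)ᶜ}).Nonempty
  · have hPc : A.Definable₁ L (Pset p M)ᶜ := (definable₁_pset p).compl
    exact ⟨_, Set.inter_subset_left, hX.inter (hPc.preimage_eval j), hout,
      fun b hb hP => absurd hP hb.2⟩
  obtain ⟨b₀, hb₀⟩ := hne
  have hP : b₀ j ∈ Pset p M := by_contra fun h => hout ⟨b₀, hb₀, h⟩
  have : Nonempty M := ⟨b₀ j⟩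
  obtain ⟨a, haA, -, b₁, hb₁, hb₁a⟩ := hA.exists_mem_of_definable
    (hX.image_comp_of_nonempty fun _ : Fin 1 => j) hP ⟨b₀, hb₀, rfl⟩
  exact ⟨_, Set.inter_subset_left,
    hX.inter ((Set.Definable.singleton_of_mem (L := L) haA).preimage_eval j),
    ⟨b₁, hb₁, congrFun hb₁a 0⟩, fun b hb _ => (Set.mem_singleton_iff.1 hb.2) ▸ haA⟩

theorem exists_definable_subset_forall_exists_witness {X : Set (ℕ → M)}
    (hX : A.Definable L X) (hne : X.Nonempty) {R : Set ((ℕ ⊕ Fin 1) → M)}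
    (hR : A.Definable L R) :
    ∃ Y ⊆ X, A.Definable L Y ∧ Y.Nonempty ∧
      ∀ b ∈ Y, ∀ x, Sum.elim b (fun _ => x) ∈ R → ∃ i, Sum.elim b (fun _ => b i) ∈ R := by
  obtain ⟨G, hG, hXsupp⟩ := hX.exists_finite_support
  obtain ⟨H, hH, hRsupp⟩ := hR.exists_finite_support
  obtain ⟨t, ht⟩ := (hG.union (hH.preimage Sum.inl_injective.injOn)).infinite_compl.nonempty
  simp only [Set.mem_compl_iff, Set.mem_union, Set.mem_preimage, not_or] at ht
  have hcomp (b : ℕ → M) : b ∘ Sum.elim id (fun _ : Fin 1 => t) = Sum.elim b fun _ => b t := by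
    rw [Sum.comp_elim]
    rfl
  let Rt := (fun b => b ∘ Sum.elim id (fun _ : Fin 1 => t)) ⁻¹' R
  by_cases hY : (X ∩ Rt).Nonempty
  · refine ⟨_, Set.inter_subset_left, hX.inter (hR.preimage_comp _), hY, fun b hb _ _ => ⟨t, ?_⟩⟩
    rw [← hcomp]
    exact hb.2
  refine ⟨X, subset_rfl, hX, hne, fun b hb x hx => absurd ⟨Function.update b t x, ?_, ?_⟩ hY⟩
  · exact (hXsupp _ b fun i hi => Function.update_of_ne (ne_of_mem_of_not_mem hi ht.1) _ _).2 hb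
  · show Function.update b t x ∘ Sum.elim id (fun _ : Fin 1 => t) ∈ R
    rw [hcomp, Function.update_self]
    refine (hRsupp _ _ ?_).1 hx
    rintro (i | i) hi
    · exact (Function.update_of_ne (fun h : i = t => ht.2 (h ▸ hi)) _ _).symm
    · rfl

theorem CountablySaturated.exists_forall_of_dense (hsat : CountablySaturated (L := L) M)
    (hA : A.Countable) [Nonempty M] {ι : Type*} [Countable ι] (Q : ι → (ℕ → M) → Prop)
    (hdense : ∀ i X, A.Definable L X → X.Nonempty →
      ∃ Y ⊆ X, A.Definable L Y ∧ Y.Nonempty ∧ ∀ b ∈ Y, Q i b) :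
    ∃ b, ∀ i, Q i b := by
  let _ := Encodable.ofCountable ι
  let 𝒟 i : Order.Cofinal {X : Set (ℕ → M) // A.Definable L X ∧ X.Nonempty}ᵒᵈ :=
    ⟨{X | ∀ b ∈ X.ofDual.1, Q i b}, fun X => by
      obtain ⟨Y, hYX, hY, hYne, hQ⟩ := hdense i _ X.ofDual.2.1 X.ofDual.2.2
      exact ⟨OrderDual.toDual ⟨Y, hY, hYne⟩, hQ, hYX⟩⟩
  let S n := (Order.sequenceOfCofinals (OrderDual.toDual ⟨Set.univ, Set.definable_univ,
    Set.univ_nonempty⟩) 𝒟 n).ofDual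
  obtain ⟨b, hb⟩ := hsat.iInter_nonempty_of_nat_vars hA (X := fun n => (S n).1)
    (fun n => (S n).2.1) (fun m n hmn => Subtype.coe_le_coe.2
      (OrderDual.ofDual_le_ofDual.2 (Order.sequenceOfCofinals.monotone _ 𝒟 hmn)))
    (fun n => (S n).2.2)
  exact ⟨b, fun i => Order.sequenceOfCofinals.encode_mem _ 𝒟 i b
    (Set.mem_iInter.1 hb (Encodable.encode i + 1))⟩

theorem exists_countable_meetsDefinable_superset [Countable L.Symbols]
    (hsat : CountablySaturated (L := L) M) (hA : A.Countable)
    (hAc : CompleteSet p M A) :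
    ∃ S : Set M, S.Countable ∧ A ⊆ S ∧ MeetsDefinable (L := L) S ∧
      Pset p M ∩ S = Pset p M ∩ A := by
  cases isEmpty_or_nonempty M
  · exact ⟨A, hA, subset_rfl, fun D ⟨x, _⟩ => isEmptyElim x, rfl⟩
  have := (Set.countable_setOf_definable (α := ℕ ⊕ Fin 1) (L := L) hA).to_subtype
  obtain ⟨b, hb⟩ := hsat.exists_forall_of_dense hA
    (ι := ℕ ⊕ {R : Set ((ℕ ⊕ Fin 1) → M) | A.Definable L R})
    (Sum.elim (fun j b => b j ∈ Pset p M → b j ∈ A)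
      fun R b => ∀ x, Sum.elim b (fun _ => x) ∈ R.1 → ∃ i, Sum.elim b (fun _ => b i) ∈ R.1)
    (by
      rintro (j | R) X hX hne
      exacts [exists_definable_subset_forall_mem_of_mem_pset hAc hX hne j,
        exists_definable_subset_forall_exists_witness hX hne R.2])
  refine ⟨A ∪ Set.range b, hA.union (Set.countable_range b), Set.subset_union_left, ?_, ?_⟩
  · rintro D ⟨x, hx⟩ hD
    obtain ⟨R, hR, hDR⟩ := Set.Definable.exists_eq_preimage_sumElim hD
    have hmem (y : M) : y ∈ D ↔ Sum.elim b (fun _ => y) ∈ R := Set.ext_iff.1 hDR fun _ => y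
    obtain ⟨i, hi⟩ := hb (Sum.inr ⟨R, hR⟩) x ((hmem x).1 hx)
    exact ⟨b i, (hmem _).2 hi, Set.mem_union_right A (Set.mem_range_self i)⟩
  · refine Set.Subset.antisymm ?_ (Set.inter_subset_inter_right _ Set.subset_union_left)
    rintro _ ⟨hP, hA | ⟨j, rfl⟩⟩
    exacts [⟨hP, hA⟩, ⟨hP, hb (Sum.inl j) hP⟩]

end

theorem countable_complete_set_elementary_substructure_general
    {L : FirstOrder.Language.{u, v}} [Countable L.Symbols]
    (p : L.Relations 1)
    (Mbar : Type (max u v)) [L.Structure Mbar]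
    (hsat : CountablySaturated (L := L) Mbar)
    (A : Set Mbar) (hA : A.Countable) (hAcomp : CompleteSet p Mbar A) :
    ∃ M : L.ElementarySubstructure Mbar, Countable M ∧ A ⊆ (M : Set Mbar) ∧
      Pset p Mbar ∩ (M : Set Mbar) = Pset p Mbar ∩ A := by
  obtain ⟨S, hSc, hAS, hS, hPS⟩ := exists_countable_meetsDefinable_superset hsat hA hAcomp
  have hcarrier : (hS.toElementarySubstructure : Set Mbar) = S := hS.closure_eq_self
  refine ⟨hS.toElementarySubstructure, ?_, hcarrier.symm ▸ hAS, hcarrier.symm ▸ hPS⟩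
  rw [← SetLike.coe_sort_coe, hcarrier]
  exact hSc.to_subtype

/-- a countable complete set is contained in a countable elementary
substructure with the same P-part. -/
theorem countable_complete_set_elementary_substructure
    {L : FirstOrder.Language.{u, v}} [Countable L.Symbols]
    (p : L.Relations 1) (hrel : Relational L)
    (T : L.Theory) (hcomp : T.IsComplete) (hqe : HasQE T) (hinf : PInfinite p T)
    (Mbar : Type (max u v)) [L.Structure Mbar] (hMbar : Mbar ⊨ T)
    (hsat : CountablySaturated (L := L) Mbar)
    (A : Set Mbar) (hA : A.Countable) (hAcomp : CompleteSet p Mbar A) :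
    ∃ M : L.ElementarySubstructure Mbar, Countable M ∧ A ⊆ (M : Set Mbar) ∧
      Pset p Mbar ∩ (M : Set Mbar) = Pset p Mbar ∩ A :=
  countable_complete_set_elementary_substructure_general p Mbar hsat A hA hAcomp

end RelCatPaper
end

section
/- Suppose T is relatively (ω,ω)-categorical. Let M be a model of T and let N₁ ≺ N₂ be models of T^P with N₁ = M^P (all inside a saturated model M̄ of T). Then the set M ∪ N₂ is complete: for every L-formula φ(x,y,z), b from M, c from N₂, if M̄ ⊨ ∃x(P(x) ∧ φ(x,b,c)) then there is e' ∈ N₂ with M̄ ⊨ φ(e',b,c). -/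
open FirstOrder FirstOrder.Language FirstOrder.Language.Structure

universe u v

namespace RelCatPaper

variable {L : FirstOrder.Language.{u, v}}

variable (p : L.Relations 1)

/-!
Split the parameters of `φ(x, c)` into a tuple `y` from `M` and a tuple `z` from `N₂`.
A countable elementary submodel `S` of `M` containing `y` is atomic over its `P`-part: if
`tp(y/P(S))` were not isolated, a Henkin construction over a generic ideal of forcing
conditions, with the even variables naming `P(S)`, would give a countable model with the same
`P`-part omitting that type, contradicting relative `(ω,ω)`-categoricity. So `tp(y/P)` is
isolated by some `θ(y, d)` with `d` in `M ∩ P = N₁ ⊆ N₂`, also in `Mbar`. By quantifier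
elimination, a formula realized in `P` with parameters in `N₂ ≺ P(Mbar)` is realized in `N₂`;
applied to `∃ y', θ(y', d) ∧ φ(x, y', z)` this gives `e₂ ∈ N₂`, and isolation turns
`φ(e₂, y', z)` into `φ(e₂, y, z)`.
-/

instance _root_.FirstOrder.Language.BoundedFormula.countable [Countable L.Symbols] {α : Type*}
    [Countable α] {n : ℕ} : Countable (L.BoundedFormula α n) :=
  Function.Injective.countable (f := fun φ => (⟨n, φ⟩ : Σ n, L.BoundedFormula α n))
    sigma_mk_injective

theorem _root_.FirstOrder.Language.BoundedFormula.realize_congr_of_freeVar {M : Type*}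
    [L.Structure M] {α : Type*} [DecidableEq α] {n : ℕ} (φ : L.BoundedFormula α n)
    {v v' : α → M} (h : ∀ x ∈ φ.freeVarFinset, v x = v' x) (xs : Fin n → M) :
    φ.Realize v xs ↔ φ.Realize v' xs := by
  rw [← BoundedFormula.realize_restrictFreeVar' subset_rfl,
    ← BoundedFormula.realize_restrictFreeVar' subset_rfl (v := v')]
  congr! 1
  funext x
  exact h x x.2

theorem _root_.FirstOrder.Language.BoundedFormula.IsQF.realize_formula_embedding {M N : Type*}
    [L.Structure M] [L.Structure N] {F : Type*} [FunLike F M N] [EmbeddingLike F M N]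
    [L.StrongHomClass F M N] {α : Type*} {φ : L.Formula α} (hφ : φ.IsQF) (f : F) {v : α → M} :
    φ.Realize (f ∘ v) ↔ φ.Realize v := by
  rw [Formula.Realize, Formula.Realize, ← hφ.realize_embedding f (xs := default)]
  exact iff_of_eq (congrArg _ (Subsingleton.elim _ _))

theorem realize_formula₁_var {M α : Type*} [L.Structure M] (v : α → M) (i : α) :
    (p.formula₁ (Term.var i)).Realize v ↔ v i ∈ Pset p M :=
  Formula.realize_rel₁

theorem _root_.FirstOrder.Language.ElementaryEmbedding.apply_mem_pset_iff {M N : Type*}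
    [L.Structure M] [L.Structure N] (E : M ↪ₑ[L] N) {x : M} : E x ∈ Pset p N ↔ x ∈ Pset p M := by
  have h := E.map_formula (p.formula₁ (Term.var ())) (fun _ => x)
  rwa [realize_formula₁_var, realize_formula₁_var] at h

theorem HasQE.exists_isQF_iff {T : L.Theory} (hqe : HasQE T) {α : Type*} [Finite α]
    (φ : L.Formula α) : ∃ ψ : L.Formula α, ψ.IsQF ∧ ∀ (M : Type (max u v)) [L.Structure M],
      M ⊨ T → ∀ v : α → M, φ.Realize v ↔ ψ.Realize v := by
  obtain ⟨n, ⟨e⟩⟩ := Finite.exists_equiv_fin α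
  obtain ⟨ψ, hψ, hφψ⟩ := hqe n (φ.relabel e)
  refine ⟨ψ.relabel e.symm, hψ.relabel _, fun M _ hM v => ?_⟩
  simpa [Formula.realize_relabel, Function.comp_assoc] using hφψ M hM (v ∘ e.symm)

variable {p} in
theorem CompleteSet.exists_of_finite {M : Type*} [L.Structure M] {A : Set M}
    (hA : CompleteSet p M A) {γ : Type*} [Finite γ] (φ : L.Formula (Fin 1 ⊕ γ)) (c : γ → M)
    (hc : ∀ i, c i ∈ A) (hφ : ∃ x ∈ Pset p M, φ.Realize (Sum.elim (fun _ => x) c)) :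
    ∃ x ∈ A, x ∈ Pset p M ∧ φ.Realize (Sum.elim (fun _ => x) c) := by
  obtain ⟨n, ⟨e⟩⟩ := Finite.exists_equiv_fin γ
  have key : ∀ x : M, (φ.relabel (Sum.map id e)).Realize (Sum.elim (fun _ => x) (c ∘ e.symm)) ↔
      φ.Realize (Sum.elim (fun _ => x) c) := fun x => by
    rw [Formula.realize_relabel]
    congr! 1
    funext i
    rcases i with i | i <;> simp
  obtain ⟨x, hxP, hx⟩ := hφ
  obtain ⟨y, hyA, hyP, hy⟩ :=
    hA n _ (c ∘ e.symm) (fun i => hc _) ⟨x, hxP, (key x).2 hx⟩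
  exact ⟨y, hyA, hyP, (key y).1 hy⟩

theorem completeSet_image_of_hasQE (hrel : Relational L) {T : L.Theory} (hqe : HasQE T)
    {Mbar : Type (max u v)} [L.Structure Mbar] (hMbar : Mbar ⊨ T)
    (N : L.ElementarySubstructure (Psub p hrel Mbar)) :
    CompleteSet p Mbar (Subtype.val '' (N : Set (Psub p hrel Mbar))) := by
  rintro n φ c hc ⟨x, hxP, hx⟩
  choose c' hc'N hc' using hc
  obtain ⟨ψ, hψ, hφψ⟩ := hqe.exists_isQF_iff φ
  have hP (x' : Fin 1 → Psub p hrel Mbar) :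
      φ.Realize (Sum.elim (fun _ => (x' 0 : Mbar)) c) ↔ ψ.Realize (Sum.elim x' c') := by
    rw [hφψ Mbar hMbar, ← hψ.realize_formula_embedding (Psub p hrel Mbar).subtype]
    congr! 1
    funext i
    rcases i with i | i
    · simp [Fin.fin_one_eq_zero i]
    · exact (hc' i).symm
  have hex := N.subtype.map_formula ((ψ.relabel Sum.swap).iExs (Fin 1)) fun i => ⟨c' i, hc'N i⟩
  simp only [Formula.realize_iExs, Formula.realize_relabel, Sum.elim_swap] at hex
  obtain ⟨y, hy⟩ := hex.1 ⟨fun _ => ⟨x, hxP⟩, (hP _).1 hx⟩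
  rw [← N.subtype.map_formula, Sum.comp_elim] at hy
  exact ⟨y 0, ⟨y 0, (y 0).2, rfl⟩, (y 0 : Psub p hrel Mbar).2, (hP _).2 hy⟩

def IsolatesOverP (M : Type*) [L.Structure M] {m n : ℕ} (θ : L.Formula (Fin m ⊕ Fin n))
    (c : Fin n → M) (b : Fin m → M) : Prop :=
  θ.Realize (Sum.elim b c) ∧
    ∀ (k : ℕ) (ψ : L.Formula (Fin m ⊕ Fin k)) (d : Fin k → M), (∀ i, d i ∈ Pset p M) →
      ψ.Realize (Sum.elim b d) → ∀ b', θ.Realize (Sum.elim b' c) → ψ.Realize (Sum.elim b' d)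

theorem isolatedOverP_iff {M : Type*} [L.Structure M] {m : ℕ} (b : Fin m → M) :
    IsolatedOverP p M b ↔ ∃ (n : ℕ) (θ : L.Formula (Fin m ⊕ Fin n)) (c : Fin n → M),
      (∀ i, c i ∈ Pset p M) ∧ IsolatesOverP p M θ c b :=
  Iff.rfl

namespace IsolatesOverP

variable {p} {M : Type*} [L.Structure M] {m n : ℕ} {θ : L.Formula (Fin m ⊕ Fin n)}
  {c : Fin n → M} {b : Fin m → M}

theorem realize_of_finite (h : IsolatesOverP p M θ c b) {γ : Type*} [Finite γ]
    (ψ : L.Formula (Fin m ⊕ γ)) (d : γ → M) (hd : ∀ i, d i ∈ Pset p M)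
    (hψ : ψ.Realize (Sum.elim b d)) (b' : Fin m → M) (hθ : θ.Realize (Sum.elim b' c)) :
    ψ.Realize (Sum.elim b' d) := by
  obtain ⟨k, ⟨e⟩⟩ := Finite.exists_equiv_fin γ
  have key : ∀ b'' : Fin m → M, (ψ.relabel (Sum.map id e)).Realize (Sum.elim b'' (d ∘ e.symm)) ↔
      ψ.Realize (Sum.elim b'' d) := fun b'' => by
    rw [Formula.realize_relabel]
    congr! 1
    funext i
    rcases i with i | i <;> simp
  exact (key b').1 (h.2 k _ _ (fun i => hd _) ((key b).2 hψ) b' hθ)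

/-- A counterexample over the `P`-part of `N` is described by a formula with parameters
`b, c`, hence also exists in `M`. -/
theorem map {N : Type*} [L.Structure N] (E : M ↪ₑ[L] N) (h : IsolatesOverP p M θ c b) :
    IsolatesOverP p N θ (E ∘ c) (E ∘ b) := by
  refine ⟨by simpa [Sum.comp_elim] using (E.map_formula θ _).2 h.1, ?_⟩
  intro k ψ d hd hψ b' hθ
  by_contra hne
  let Ξ : L.Formula (Fin m ⊕ Fin n) := Formula.iExs (Fin k ⊕ Fin m)
    (Formula.iInf (fun i => p.formula₁ (Term.var (Sum.inr (Sum.inl i)))) ⊓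
      ψ.relabel (Sum.elim (Sum.inl ∘ Sum.inl) (Sum.inr ∘ Sum.inl)) ⊓
      θ.relabel (Sum.elim (Sum.inr ∘ Sum.inr) (Sum.inl ∘ Sum.inr)) ⊓
      (ψ.relabel (Sum.elim (Sum.inr ∘ Sum.inr) (Sum.inr ∘ Sum.inl))).not)
  have hN : Ξ.Realize (Sum.elim (E ∘ b) (E ∘ c)) := by
    refine Formula.realize_iExs.2 ⟨Sum.elim d b', ?_⟩
    simp only [Formula.realize_inf, Formula.realize_iInf, Formula.realize_relabel,
      Formula.realize_not, realize_formula₁_var, Sum.comp_elim, ← Function.comp_assoc,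
      Sum.elim_comp_inl, Sum.elim_comp_inr]
    exact ⟨⟨⟨hd, hψ⟩, hθ⟩, hne⟩
  rw [← Sum.comp_elim, E.map_formula] at hN
  obtain ⟨i, hi⟩ := Formula.realize_iExs.1 hN
  simp only [Formula.realize_inf, Formula.realize_iInf, Formula.realize_relabel,
      Formula.realize_not, realize_formula₁_var, Sum.comp_elim, ← Function.comp_assoc,
      Sum.elim_comp_inl, Sum.elim_comp_inr] at hi
  obtain ⟨⟨⟨hw, hψw⟩, hθy'⟩, hne'⟩ := hi
  exact hne' (h.2 k ψ _ hw hψw _ hθy')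

end IsolatesOverP

theorem exists_countable_elementarySubstructure [Countable L.Symbols] {M : Type*}
    [L.Structure M] [Infinite M] {s : Set M} (hs : s.Countable) :
    ∃ S : L.ElementarySubstructure M, s ⊆ S ∧ Countable S := by
  obtain ⟨S, hsS, hS⟩ := exists_elementarySubstructure_card_eq L s Cardinal.aleph0.{0} le_rfl
    (by simpa using hs.le_aleph0)
    (by rw [Cardinal.lift_aleph0, Cardinal.lift_le_aleph0]; exact Cardinal.mk_le_aleph0)
    (by simp [Cardinal.aleph0_le_mk M])
  rw [Cardinal.lift_aleph0, Cardinal.lift_eq_aleph0] at hS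
  exact ⟨S, hsS, Cardinal.mk_le_aleph0_iff.1 hS.le⟩

theorem exists_sumElim_comp_eq {α ι : Type*} {A B : Set α} (c : ι → α) (hc : ∀ i, c i ∈ A ∪ B)
    (hA : A.Nonempty) (hB : B.Nonempty) :
    ∃ (f : ι → ι ⊕ ι) (y z : ι → α), (∀ i, y i ∈ A) ∧ (∀ i, z i ∈ B) ∧ Sum.elim y z ∘ f = c := by
  classical
  refine ⟨fun i => if c i ∈ A then .inl i else .inr i,
    fun i => if c i ∈ A then c i else hA.some, fun i => if c i ∈ A then hB.some else c i,
    fun i => ?_, fun i => ?_, funext fun i => ?_⟩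
  · by_cases h : c i ∈ A <;> simp [h, hA.some_mem]
  · by_cases h : c i ∈ A <;> simp [h, hB.some_mem, (hc i).resolve_left]
  · by_cases h : c i ∈ A <;> simp [h]

section Forcing

variable {N : Type*} [L.Structure N] (a : ℕ → N)

def Pinned (v : ℕ → N) : Prop := ∀ i, v (2 * i) = a i

def Entails (φ χ : L.Formula ℕ) : Prop := ∀ v, Pinned a v → φ.Realize v → χ.Realize v

variable (L) in
/-- Forcing conditions; a condition is larger when it is stronger. -/
def Condition : Type (max u v) := {φ : L.Formula ℕ // ∃ v, Pinned a v ∧ φ.Realize v}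

instance : Preorder (Condition L a) where
  le φ ψ := Entails a ψ.1 φ.1
  le_refl _ _ _ := id
  le_trans _ _ _ h₁ h₂ v hv := h₁ v hv ∘ h₂ v hv

variable {a}

theorem pinned_div_two : Pinned a fun i => a (i / 2) := fun i => by
  simp

theorem Condition.exists_le_of_realize (φ : Condition L a) {χ : L.Formula ℕ} {v : ℕ → N}
    (hv : Pinned a v) (hφ : φ.1.Realize v) (hχ : χ.Realize v) :
    ∃ ψ : Condition L a, Entails a ψ.1 χ ∧ φ ≤ ψ :=
  ⟨⟨φ.1 ⊓ χ, v, hv, Formula.realize_inf.2 ⟨hφ, hχ⟩⟩,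
    fun _ _ h => (Formula.realize_inf.1 h).2, fun _ _ h => (Formula.realize_inf.1 h).1⟩

def Forced (G : Order.Ideal (Condition L a)) (χ : L.Formula ℕ) : Prop :=
  ∃ φ ∈ G, Entails a φ.1 χ

section Forced

variable {G : Order.Ideal (Condition L a)} {χ χ₁ χ₂ : L.Formula ℕ}

theorem Forced.exists_realize (h : Forced G χ) : ∃ v, Pinned a v ∧ χ.Realize v := by
  obtain ⟨φ, -, hφ⟩ := h
  obtain ⟨v, hv, hφv⟩ := φ.2
  exact ⟨v, hv, hφ v hv hφv⟩

theorem forced_of_finset (s : Finset (L.Formula ℕ)) (hs : ∀ ψ ∈ s, Forced G ψ)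
    (h : ∀ v, Pinned a v → (∀ ψ ∈ s, ψ.Realize v) → χ.Realize v) : Forced G χ := by
  classical
  suffices ∃ φ ∈ G, ∀ ψ ∈ s, Entails a φ.1 ψ by
    obtain ⟨φ, hφG, hφ⟩ := this
    exact ⟨φ, hφG, fun v hv hφv => h v hv fun ψ hψ => hφ ψ hψ v hv hφv⟩
  clear h
  induction s using Finset.induction_on with
  | empty =>
    obtain ⟨φ, hφ⟩ := G.nonempty
    exact ⟨φ, hφ, by simp⟩
  | insert ψ s _ ih =>
    obtain ⟨φ₁, hφ₁G, hφ₁⟩ := ih (fun ψ' hψ' => hs ψ' (Finset.mem_insert_of_mem hψ'))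
    obtain ⟨φ₂, hφ₂G, hφ₂⟩ := hs ψ (Finset.mem_insert_self _ _)
    obtain ⟨φ, hφG, h₁, h₂⟩ := G.directed _ hφ₁G _ hφ₂G
    refine ⟨φ, hφG, ?_⟩
    simp only [Finset.mem_insert, forall_eq_or_imp]
    exact ⟨fun v hv hφv => hφ₂ v hv (h₂ v hv hφv),
      fun ψ' hψ' v hv hφv => hφ₁ ψ' hψ' v hv (h₁ v hv hφv)⟩

theorem forced_of_forall (h : ∀ v, Pinned a v → χ.Realize v) : Forced G χ :=
  forced_of_finset ∅ (by simp) fun v hv _ => h v hv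

theorem Forced.mono (hχ : Forced G χ₁) (h : Entails a χ₁ χ₂) : Forced G χ₂ :=
  forced_of_finset {χ₁} (by simpa using hχ) fun v hv h' => h v hv (h' χ₁ (by simp))

theorem Forced.mono₂ (h₁ : Forced G χ₁) (h₂ : Forced G χ₂)
    (h : ∀ v, Pinned a v → χ₁.Realize v → χ₂.Realize v → χ.Realize v) : Forced G χ := by
  classical
  exact forced_of_finset {χ₁, χ₂} (by simp [h₁, h₂])
    fun v hv h' => h v hv (h' _ (by simp)) (h' _ (by simp))

theorem Forced.not_forced_not (h : Forced G χ) : ¬ Forced G χ.not := fun h' => by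
  obtain ⟨v, -, hv⟩ := (h.mono₂ h' (χ := ⊥) fun v _ h₁ h₂ => (Formula.realize_not.1 h₂ h₁).elim)
    |>.exists_realize
  exact hv

theorem forced_iff {P : Prop} (h : ∀ v, Pinned a v → (χ.Realize v ↔ P)) : Forced G χ ↔ P :=
  ⟨fun hχ => let ⟨v, hv, hχv⟩ := hχ.exists_realize; (h v hv).1 hχv,
    fun hP => forced_of_forall fun v hv => (h v hv).2 hP⟩

theorem forced_congr (h : ∀ v, Pinned a v → (χ₁.Realize v ↔ χ₂.Realize v)) :
    Forced G χ₁ ↔ Forced G χ₂ :=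
  ⟨fun hχ => hχ.mono fun v hv => (h v hv).1, fun hχ => hχ.mono fun v hv => (h v hv).2⟩

end Forced

/-- Substitutes the variables `σ` for the bound variables of `φ`. -/
def instantiate {n : ℕ} (φ : L.BoundedFormula ℕ n) (σ : Fin n → ℕ) : L.Formula ℕ :=
  φ.toFormula.relabel (Sum.elim id σ)

theorem realize_instantiate {M : Type*} [L.Structure M] {n : ℕ} (φ : L.BoundedFormula ℕ n)
    (σ : Fin n → ℕ) (v : ℕ → M) : (instantiate φ σ).Realize v ↔ φ.Realize v (v ∘ σ) := by
  rw [instantiate, Formula.realize_relabel, BoundedFormula.realize_toFormula]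
  rfl

/-- `complete` and `henkin` give the truth lemma for the canonical model; `collapse` makes its
`P`-part consist of the even variables. -/
structure IsHenkin (G : Order.Ideal (Condition L a)) : Prop where
  complete (χ : L.Formula ℕ) : Forced G χ ∨ Forced G χ.not
  henkin {n : ℕ} (ψ : L.BoundedFormula ℕ (n + 1)) (σ : Fin n → ℕ) :
    Forced G (instantiate ψ.all σ) ∨ ∃ c, Forced G (instantiate ψ (Fin.snoc σ c)).not
  collapse (i : ℕ) : (∃ j, Forced G ((Term.var i).equal (Term.var (2 * j)))) ∨
    Forced G (p.formula₁ (Term.var i)).not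

end Forcing

section Genericity

variable {N : Type*} [L.Structure N] {a : ℕ → N}

theorem exists_ne_two_mul_notMem (s : Finset ℕ) : ∃ c ∉ s, ∀ i, c ≠ 2 * i := by
  refine ⟨2 * s.sup id + 1, fun h => ?_, fun i => by omega⟩
  have := Finset.le_sup (f := id) h
  simp only [id] at this
  omega

namespace Condition

theorem exists_decides (φ : Condition L a) (χ : L.Formula ℕ) :
    ∃ ψ : Condition L a, (Entails a ψ.1 χ ∨ Entails a ψ.1 χ.not) ∧ φ ≤ ψ := by
  obtain ⟨v, hv, hφ⟩ := φ.2
  by_cases hχ : χ.Realize v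
  · obtain ⟨ψ, hψ, h⟩ := φ.exists_le_of_realize hv hφ hχ
    exact ⟨ψ, .inl hψ, h⟩
  · obtain ⟨ψ, hψ, h⟩ := φ.exists_le_of_realize hv hφ (Formula.realize_not.2 hχ)
    exact ⟨ψ, .inr hψ, h⟩

/-- Henkin witnesses are fresh odd variables, which pinned valuations leave free. -/
theorem exists_henkin (φ : Condition L a) {n : ℕ} (ψ : L.BoundedFormula ℕ (n + 1))
    (σ : Fin n → ℕ) : ∃ φ' : Condition L a, (Entails a φ'.1 (instantiate ψ.all σ) ∨
      ∃ c, Entails a φ'.1 (instantiate ψ (Fin.snoc σ c)).not) ∧ φ ≤ φ' := by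
  classical
  obtain ⟨v, hv, hφ⟩ := φ.2
  by_cases hall : (instantiate ψ.all σ).Realize v
  · obtain ⟨φ', hφ', h⟩ := φ.exists_le_of_realize hv hφ hall
    exact ⟨φ', .inl hφ', h⟩
  rw [realize_instantiate, BoundedFormula.realize_all, not_forall] at hall
  obtain ⟨x, hx⟩ := hall
  obtain ⟨c, hc, hodd⟩ :=
    exists_ne_two_mul_notMem (φ.1.freeVarFinset ∪ ψ.freeVarFinset ∪ Finset.univ.image σ)
  have hvc : ∀ i ∈ φ.1.freeVarFinset ∪ ψ.freeVarFinset ∪ Finset.univ.image σ,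
      Function.update v c x i = v i := fun i hi =>
    Function.update_of_ne (by rintro rfl; exact hc hi) _ _
  have hσ : Function.update v c x ∘ σ = v ∘ σ :=
    funext fun j => hvc _ (by simp)
  have hv' : Pinned a (Function.update v c x) := fun i => by
    rw [Function.update_of_ne (hodd i).symm, hv i]
  have hφ' : φ.1.Realize (Function.update v c x) :=
    (φ.1.realize_congr_of_freeVar (fun i hi => hvc i (by simp [hi])) default).2 hφ
  have hψ' : (instantiate ψ (Fin.snoc σ c)).not.Realize (Function.update v c x) := by
    rw [Formula.realize_not, realize_instantiate, Fin.comp_snoc, hσ, Function.update_self,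
      ψ.realize_congr_of_freeVar (fun i hi => hvc i (by simp [hi]))]
    exact hx
  obtain ⟨φ', hφ'', h⟩ := φ.exists_le_of_realize hv' hφ' hψ'
  exact ⟨φ', .inr ⟨c, hφ''⟩, h⟩

theorem exists_collapse (hsur : ∀ x ∈ Pset p N, ∃ j, a j = x) (φ : Condition L a) (i : ℕ) :
    ∃ φ' : Condition L a, ((∃ j, Entails a φ'.1 ((Term.var i).equal (Term.var (2 * j)))) ∨
      Entails a φ'.1 (p.formula₁ (Term.var i)).not) ∧ φ ≤ φ' := by
  obtain ⟨v, hv, hφ⟩ := φ.2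
  by_cases hP : v i ∈ Pset p N
  · obtain ⟨j, hj⟩ := hsur _ hP
    obtain ⟨φ', hφ', h⟩ := φ.exists_le_of_realize (χ := (Term.var i).equal (Term.var (2 * j)))
      hv hφ (by simp [hv j, hj])
    exact ⟨φ', .inl ⟨j, hφ'⟩, h⟩
  · obtain ⟨φ', hφ', h⟩ := φ.exists_le_of_realize hv hφ
      (by rwa [Formula.realize_not, realize_formula₁_var])
    exact ⟨φ', .inr hφ', h⟩

end Condition

theorem exists_pinned_extend {B : ℕ} (w : Fin B → N)
    (hw : ∀ i : Fin B, Even (i : ℕ) → w i = a (i / 2)) :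
    ∃ v, Pinned a v ∧ ∀ i : Fin B, v i = w i := by
  refine ⟨fun i => if h : i < B then w ⟨i, h⟩ else a (i / 2), fun i => ?_, fun i => by simp⟩
  dsimp only
  split_ifs with h
  · simpa using hw ⟨2 * i, h⟩ (by simp)
  · simp

variable (a) in
/-- All variables of `φ` lie below some `B`; the even ones are tied to the parameters
`a (i / 2)`, and then all of them are quantified away. -/
theorem exists_realize_iff_pinned (φ : L.Formula ℕ) {m : ℕ} (c : Fin m → ℕ) :
    ∃ (k : ℕ) (δ : L.Formula (Fin m ⊕ Fin k)) (e : Fin k → ℕ), ∀ y : Fin m → N,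
      δ.Realize (Sum.elim y (a ∘ e)) ↔ ∃ v, Pinned a v ∧ φ.Realize v ∧ v ∘ c = y := by
  classical
  set B := (φ.freeVarFinset ∪ Finset.univ.image c).sup id
  have hφB : ∀ i ∈ φ.freeVarFinset, i ≤ B := fun i hi =>
    Finset.le_sup (f := id) (Finset.mem_union_left _ hi)
  have hcB : ∀ j, c j ≤ B := fun j =>
    Finset.le_sup (f := id) (Finset.mem_union_right _ (Finset.mem_image_of_mem c (by simp)))
  let g : ℕ → Fin (B + 1) := fun i => ⟨min i B, by omega⟩
  have hg : ∀ i ≤ B, (g i : ℕ) = i := fun i hi => min_eq_left hi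
  refine ⟨B + 1, Formula.iExs (Fin (B + 1))
    (φ.relabel (Sum.inr ∘ g) ⊓
      Formula.iInf (fun j => (Term.var (Sum.inr (g (c j)))).equal (Term.var (Sum.inl (Sum.inl j))))
      ⊓ Formula.iInf (fun i : {i : Fin (B + 1) // Even (i : ℕ)} =>
          (Term.var (Sum.inr i.1)).equal (Term.var (Sum.inl (Sum.inr i.1))))),
    fun i => i / 2, fun y => ?_⟩
  simp only [Formula.realize_iExs, Formula.realize_inf, Formula.realize_iInf,
    Formula.realize_relabel, Formula.realize_equal, Term.realize_var, Sum.elim_inl,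
    Sum.elim_inr, Function.comp_apply, Subtype.forall]
  constructor
  · rintro ⟨w, ⟨hφw, hcw⟩, hev⟩
    obtain ⟨v, hv, hvw⟩ := exists_pinned_extend w hev
    have hvg : ∀ i ≤ B, v i = w (g i) := fun i hi => by simpa [hg i hi] using hvw (g i)
    exact ⟨v, hv, (φ.realize_congr_of_freeVar (fun i hi => hvg i (hφB i hi)) default).2 hφw,
      funext fun j => (hvg _ (hcB j)).trans (hcw j)⟩
  · rintro ⟨v, hv, hφv, rfl⟩
    refine ⟨fun i => v i, ⟨(φ.realize_congr_of_freeVar (fun i hi => ?_) default).2 hφv,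
      fun j => ?_⟩, fun i hi => ?_⟩
    · simp [hg i (hφB i hi)]
    · simp [hg _ (hcB j)]
    · obtain ⟨r, hr⟩ := hi
      simp [hr, ← two_mul, ← hv r]

/-- Otherwise the formula given by `exists_realize_iff_pinned` would isolate the type of `b`. -/
theorem Condition.exists_omits (ha : ∀ i, a i ∈ Pset p N) (hsur : ∀ x ∈ Pset p N, ∃ j, a j = x)
    {m : ℕ} {b : Fin m → N} (hb : ¬ IsolatedOverP p N b) (φ : Condition L a) (c : Fin m → ℕ) :
    ∃ φ' : Condition L a, (∃ (k : ℕ) (ψ : L.Formula (Fin m ⊕ Fin k)) (d : Fin k → ℕ),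
      ψ.Realize (Sum.elim b (a ∘ d)) ∧
        Entails a φ'.1 (ψ.relabel (Sum.elim c fun i => 2 * d i)).not) ∧ φ ≤ φ' := by
  suffices ∃ (k : ℕ) (ψ : L.Formula (Fin m ⊕ Fin k)) (d : Fin k → ℕ),
      ψ.Realize (Sum.elim b (a ∘ d)) ∧
        ∃ v, Pinned a v ∧ φ.1.Realize v ∧ ¬ ψ.Realize (Sum.elim (v ∘ c) (a ∘ d)) by
    obtain ⟨k, ψ, d, hψ, v, hv, hφ, hne⟩ := this
    have hvd : v ∘ (fun i => 2 * d i) = a ∘ d := funext fun i => hv (d i)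
    obtain ⟨φ', hφ', h⟩ := φ.exists_le_of_realize hv hφ
      (χ := (ψ.relabel (Sum.elim c fun i => 2 * d i)).not)
      (by rwa [Formula.realize_not, Formula.realize_relabel, Sum.comp_elim, hvd])
    exact ⟨φ', ⟨k, ψ, d, hψ, hφ'⟩, h⟩
  by_contra! hall
  obtain ⟨k, δ, e, hδ⟩ := exists_realize_iff_pinned a φ.1 c
  have htransfer : ∀ (k' : ℕ) (ψ : L.Formula (Fin m ⊕ Fin k')) (d : Fin k' → ℕ),
      ψ.Realize (Sum.elim b (a ∘ d)) → ∀ y, δ.Realize (Sum.elim y (a ∘ e)) →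
        ψ.Realize (Sum.elim y (a ∘ d)) := by
    intro k' ψ d hψ y hy
    obtain ⟨v, hv, hφ, rfl⟩ := (hδ y).1 hy
    exact hall k' ψ d hψ v hv hφ
  obtain ⟨v₀, hv₀, hφ₀⟩ := φ.2
  have hδ₀ := (hδ _).2 ⟨v₀, hv₀, hφ₀, rfl⟩
  have hδb : δ.Realize (Sum.elim b (a ∘ e)) := by
    by_contra hne
    exact Formula.realize_not.1
      (htransfer k δ.not e (Formula.realize_not.2 hne) _ hδ₀) hδ₀
  refine hb ⟨k, δ, a ∘ e, fun i => ha _, hδb, fun k' ψ d hd hψ y hy => ?_⟩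
  choose d' hd' using fun i => hsur (d i) (hd i)
  obtain rfl : a ∘ d' = d := funext hd'
  exact htransfer k' ψ d' hψ y hy

variable [Countable L.Symbols]

/-- The Rasiowa–Sikorski lemma, there being countably many requirements. -/
theorem exists_isHenkin_omits (ha : ∀ i, a i ∈ Pset p N) (hsur : ∀ x ∈ Pset p N, ∃ j, a j = x)
    {m : ℕ} {b : Fin m → N} (hb : ¬ IsolatedOverP p N b) :
    ∃ G : Order.Ideal (Condition L a), IsHenkin p G ∧ ∀ c : Fin m → ℕ,
      ∃ (k : ℕ) (ψ : L.Formula (Fin m ⊕ Fin k)) (d : Fin k → ℕ),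
        ψ.Realize (Sum.elim b (a ∘ d)) ∧
          Forced G (ψ.relabel (Sum.elim c fun i => 2 * d i)).not := by
  let ι := L.Formula ℕ ⊕ (Σ n, L.BoundedFormula ℕ (n + 1) × (Fin n → ℕ)) ⊕ ℕ ⊕ (Fin m → ℕ)
  have : Encodable ι := Encodable.ofCountable ι
  let 𝒟 : ι → Order.Cofinal (Condition L a) :=
    Sum.elim (fun χ => ⟨_, fun φ => φ.exists_decides χ⟩) <|
      Sum.elim (fun t => ⟨_, fun φ => φ.exists_henkin t.2.1 t.2.2⟩) <|
        Sum.elim (fun i => ⟨_, fun φ => φ.exists_collapse p hsur i⟩)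
          (fun c => ⟨_, fun φ => φ.exists_omits p ha hsur hb c⟩)
  let G := Order.idealOfCofinals ⟨⊤, _, pinned_div_two, by simp⟩ 𝒟
  have meets := Order.cofinal_meets_idealOfCofinals ⟨⊤, _, pinned_div_two, by simp⟩ 𝒟
  refine ⟨G, ⟨fun χ => ?_, fun ψ σ => ?_, fun i => ?_⟩, fun c => ?_⟩
  · obtain ⟨φ, hφ, hφG⟩ := meets (.inl χ)
    exact hφ.imp (⟨φ, hφG, ·⟩) (⟨φ, hφG, ·⟩)
  · obtain ⟨φ, hφ, hφG⟩ := meets (.inr (.inl ⟨_, ψ, σ⟩))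
    exact hφ.imp (⟨φ, hφG, ·⟩) fun ⟨c, h⟩ => ⟨c, φ, hφG, h⟩
  · obtain ⟨φ, hφ, hφG⟩ := meets (.inr (.inr (.inl i)))
    exact hφ.imp (fun ⟨j, h⟩ => ⟨j, φ, hφG, h⟩) (⟨φ, hφG, ·⟩)
  · obtain ⟨φ, ⟨k, ψ, d, hψ, h⟩, hφG⟩ := meets (.inr (.inr (.inr c)))
    exact ⟨k, ψ, d, hψ, φ, hφG, h⟩

end Genericity

theorem _root_.FirstOrder.Language.Term.exists_eq_var [L.IsRelational] {α : Type*}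
    (t : L.Term α) : ∃ i, t = Term.var i := by
  cases t with
  | var i => exact ⟨i, rfl⟩
  | func f _ => exact isEmptyElim f

theorem _root_.FirstOrder.Language.BoundedFormula.IsAtomic.toFormula {α : Type*} {n : ℕ}
    {φ : L.BoundedFormula α n} (h : φ.IsAtomic) : φ.toFormula.IsAtomic := by
  cases h with
  | equal => exact .equal _ _
  | rel => exact .rel _ _

section HenkinModel

variable {p} {N : Type*} [L.Structure N] {a : ℕ → N} (G : Order.Ideal (Condition L a))

def henkinSetoid : Setoid (ULift.{max u v} ℕ) where
  r i j := Forced G ((Term.var i.down).equal (Term.var j.down))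
  iseqv :=
    ⟨fun _ => forced_of_forall fun _ _ => by simp,
      fun h => h.mono fun _ _ h => by simpa [eq_comm] using h,
      fun h₁ h₂ => h₁.mono₂ h₂ fun _ _ h₁ h₂ => by simp_all⟩

def HenkinModel : Type (max u v) := Quotient (henkinSetoid G)

namespace HenkinModel

def ofVar (i : ℕ) : HenkinModel G := Quotient.mk _ ⟨i⟩

theorem ofVar_surjective : Function.Surjective (ofVar G) := by
  rintro ⟨⟨i⟩⟩
  exact ⟨i, rfl⟩

instance : Countable (HenkinModel G) := (ofVar_surjective G).countable

theorem ofVar_eq_iff {i j : ℕ} :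
    ofVar G i = ofVar G j ↔ Forced G ((Term.var i).equal (Term.var j)) :=
  ⟨Quotient.exact, fun h => Quotient.sound h⟩

theorem ofVar_two_mul_eq_iff {i j : ℕ} : ofVar G (2 * i) = ofVar G (2 * j) ↔ a i = a j :=
  (ofVar_eq_iff G).trans (forced_iff fun v hv => by simp [hv i, hv j])

instance [L.IsRelational] : L.Structure (HenkinModel G) where
  funMap f := isEmptyElim f
  RelMap {l} R xs :=
    ∃ w : Fin l → ℕ, ofVar G ∘ w = xs ∧ Forced G (R.formula fun i => Term.var (w i))

variable [L.IsRelational]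

theorem relMap_ofVar_iff {l : ℕ} (R : L.Relations l) (w : Fin l → ℕ) :
    RelMap R (ofVar G ∘ w) ↔ Forced G (R.formula fun i => Term.var (w i)) := by
  classical
  refine ⟨fun ⟨w', hw', hR⟩ => ?_, fun h => ⟨w, rfl, h⟩⟩
  refine forced_of_finset (insert (R.formula fun i => Term.var (w' i))
    (Finset.univ.image fun i => (Term.var (w' i)).equal (Term.var (w i)))) ?_ fun v _ h => ?_
  · simp only [Finset.mem_insert, Finset.mem_image, Finset.mem_univ, true_and,
      forall_eq_or_imp, forall_exists_index, forall_apply_eq_imp_iff]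
    exact ⟨hR, fun i => (ofVar_eq_iff G).1 (congrFun hw' i)⟩
  · simp only [Finset.mem_insert, Finset.mem_image, Finset.mem_univ, true_and,
      forall_eq_or_imp, forall_exists_index, forall_apply_eq_imp_iff, Formula.realize_rel,
      Formula.realize_equal, Term.realize_var] at h ⊢
    simpa [h.2] using h.1

theorem realize_ofVar_iff_of_isAtomic {χ : L.Formula ℕ} (hχ : χ.IsAtomic) :
    χ.Realize (ofVar G) ↔ Forced G χ := by
  have hvar (t : L.Term (ℕ ⊕ Fin 0)) : ∃ i, t = Term.var (Sum.inl i) := by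
    obtain ⟨i | i, rfl⟩ := t.exists_eq_var
    exacts [⟨i, rfl⟩, i.elim0]
  cases hχ with
  | equal t₁ t₂ =>
    obtain ⟨i, rfl⟩ := hvar t₁
    obtain ⟨j, rfl⟩ := hvar t₂
    exact ofVar_eq_iff G
  | rel R ts =>
    choose w hw using fun i => hvar (ts i)
    obtain rfl : ts = fun i => Term.var (Sum.inl (w i)) := funext hw
    exact relMap_ofVar_iff G R w

theorem realize_iff_forced (hG : IsHenkin p G) {n : ℕ} (φ : L.BoundedFormula ℕ n)
    (σ : Fin n → ℕ) : φ.Realize (ofVar G) (ofVar G ∘ σ) ↔ Forced G (instantiate φ σ) := by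
  induction φ with
  | falsum =>
    refine iff_of_false id fun h => ?_
    obtain ⟨v, -, hv⟩ := h.exists_realize
    exact (realize_instantiate _ _ _).1 hv
  | equal t₁ t₂ =>
    rw [← realize_instantiate]
    exact realize_ofVar_iff_of_isAtomic G (.relabel (.toFormula (.equal t₁ t₂)) _)
  | rel R ts =>
    rw [← realize_instantiate]
    exact realize_ofVar_iff_of_isAtomic G (.relabel (.toFormula (.rel R ts)) _)
  | imp φ₁ φ₂ ih₁ ih₂ =>
    have himp (v : ℕ → N) : (instantiate (φ₁.imp φ₂) σ).Realize v ↔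
        ((instantiate φ₁ σ).Realize v → (instantiate φ₂ σ).Realize v) := by
      simp only [realize_instantiate, BoundedFormula.realize_imp]
    rw [BoundedFormula.realize_imp, ih₁, ih₂]
    refine ⟨fun h => ?_, fun h h₁ => h.mono₂ h₁ fun v _ h h₁ => (himp v).1 h h₁⟩
    rcases hG.complete (instantiate φ₁ σ) with h₁ | h₁
    · exact (h h₁).mono fun v _ h₂ => (himp v).2 fun _ => h₂
    · exact h₁.mono fun v _ h₁ => (himp v).2 fun h => (Formula.realize_not.1 h₁ h).elim
  | all ψ ih =>
    rw [BoundedFormula.realize_all, (ofVar_surjective G).forall]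
    simp only [← Fin.comp_snoc, ih]
    refine ⟨fun h => ?_, fun h c => h.mono fun v _ hv => ?_⟩
    · rcases hG.henkin ψ σ with h' | ⟨c, hc⟩
      exacts [h', ((h c).not_forced_not hc).elim]
    · rw [realize_instantiate, BoundedFormula.realize_all] at hv
      rw [realize_instantiate, Fin.comp_snoc]
      exact hv (v c)

theorem realize_formula_iff_forced (hG : IsHenkin p G) (χ : L.Formula ℕ) :
    χ.Realize (ofVar G) ↔ Forced G χ := by
  have h := realize_iff_forced G hG χ Fin.elim0
  rw [forced_congr (χ₂ := χ) fun v _ => by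
    rw [realize_instantiate]; exact iff_of_eq (congrArg _ (Subsingleton.elim _ _))] at h
  rwa [Subsingleton.elim (ofVar G ∘ Fin.elim0) default] at h

theorem models (hG : IsHenkin p G) {T : L.Theory} (hN : N ⊨ T) : HenkinModel G ⊨ T := by
  refine ⟨fun φ hφ => ?_⟩
  have h := (realize_formula_iff_forced G hG (φ.relabel Empty.elim)).2
    (forced_of_forall fun v _ => by
      rw [Formula.realize_relabel, Subsingleton.elim (v ∘ Empty.elim) default]
      exact T.realize_sentence_of_mem (M := N) hφ)
  rwa [Formula.realize_relabel, Subsingleton.elim (ofVar G ∘ Empty.elim) default] at h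

theorem ofVar_two_mul_mem (ha : ∀ i, a i ∈ Pset p N) (hG : IsHenkin p G) (j : ℕ) :
    ofVar G (2 * j) ∈ Pset p (HenkinModel G) := by
  rw [← realize_formula₁_var, realize_formula_iff_forced G hG]
  exact forced_of_forall fun v hv => by rw [realize_formula₁_var, hv j]; exact ha j

theorem exists_ofVar_two_mul_eq (hG : IsHenkin p G) {x : HenkinModel G}
    (hx : x ∈ Pset p (HenkinModel G)) : ∃ j, ofVar G (2 * j) = x := by
  obtain ⟨i, rfl⟩ := ofVar_surjective G x
  rcases hG.collapse i with ⟨j, hj⟩ | h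
  · exact ⟨j, ((ofVar_eq_iff G).2 hj).symm⟩
  · rw [← realize_formula₁_var, realize_formula_iff_forced G hG] at hx
    exact (hx.not_forced_not h).elim

theorem relMap_ofVar_two_mul_iff {l : ℕ} (R : L.Relations l) (w : Fin l → ℕ) :
    RelMap R (fun t => ofVar G (2 * w t)) ↔ RelMap R (a ∘ w) :=
  (relMap_ofVar_iff G R fun t => 2 * w t).trans
    (forced_iff fun v hv => by
      simp only [Formula.realize_rel, Term.realize_var]
      rw [show (fun t => v (2 * w t)) = a ∘ w from funext fun t => hv (w t)])

theorem exists_pPart_equiv (hrel : Relational L) (ha : ∀ i, a i ∈ Pset p N) (hG : IsHenkin p G)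
    (hsur : ∀ x ∈ Pset p N, ∃ j, a j = x) : ∃ f : Psub p hrel N ≃[L] Psub p hrel (HenkinModel G),
      ∀ j, (f ⟨a j, ha j⟩ : HenkinModel G) = ofVar G (2 * j) := by
  choose idx hidx using fun x : Psub p hrel N => hsur x x.2
  let F : Psub p hrel N → Psub p hrel (HenkinModel G) :=
    fun x => ⟨ofVar G (2 * idx x), ofVar_two_mul_mem G ha hG _⟩
  have hF : ∀ j, (F ⟨a j, ha j⟩ : HenkinModel G) = ofVar G (2 * j) := fun j =>
    (ofVar_two_mul_eq_iff G).2 (hidx _)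
  have hbij : F.Bijective := by
    refine ⟨fun x y hxy => Subtype.ext ?_, fun y => ?_⟩
    · rw [← hidx x, ← hidx y]
      exact (ofVar_two_mul_eq_iff G).1 (congrArg Subtype.val hxy)
    · obtain ⟨j, hj⟩ := exists_ofVar_two_mul_eq G hG y.2
      exact ⟨⟨a j, ha j⟩, Subtype.ext ((hF j).trans hj)⟩
  refine ⟨⟨Equiv.ofBijective F hbij, fun f => isEmptyElim f, fun R xs => ?_⟩, hF⟩
  change RelMap R (fun t => ofVar G (2 * idx (xs t))) ↔ RelMap R (Subtype.val ∘ xs)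
  rw [relMap_ofVar_two_mul_iff G]
  exact iff_of_eq (congrArg _ (funext fun t => hidx (xs t)))

end HenkinModel

end HenkinModel

theorem atomicOverP_of_relativelyCatCC [Countable L.Symbols] (hrel : Relational L)
    {T : L.Theory} (hcat : RelativelyCatCC p hrel T) {N : Type (max u v)} [L.Structure N]
    [Countable N] (hN : N ⊨ T) (hP : (Pset p N).Nonempty) : AtomicOverP p N := by
  intro m b
  by_contra hb
  have : L.IsRelational := hrel
  obtain ⟨a, ha, hsur⟩ : ∃ a : ℕ → N, (∀ i, a i ∈ Pset p N) ∧ ∀ x ∈ Pset p N, ∃ j, a j = x := by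
    have := hP.to_subtype
    obtain ⟨e, he⟩ := exists_surjective_nat (Pset p N)
    exact ⟨fun i => e i, fun i => (e i).2,
      fun x hx => (he ⟨x, hx⟩).imp fun _ h => congrArg Subtype.val h⟩
  obtain ⟨G, hG, homit⟩ := exists_isHenkin_omits p ha hsur hb
  obtain ⟨f, hf⟩ := HenkinModel.exists_pPart_equiv G hrel ha hG hsur
  obtain ⟨g, hg⟩ := hcat N (HenkinModel G) hN (HenkinModel.models G hG hN) ‹_› inferInstance f
  choose c hc using fun i => HenkinModel.ofVar_surjective G (g (b i))
  obtain ⟨k, ψ, d, hψ, hforced⟩ := homit c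
  have hK := (HenkinModel.realize_formula_iff_forced G hG _).2 hforced
  rw [Formula.realize_not, Formula.realize_relabel] at hK
  have hgc : HenkinModel.ofVar G ∘ Sum.elim c (fun i => 2 * d i) = g ∘ Sum.elim b (a ∘ d) := by
    funext x
    rcases x with i | i
    · exact hc i
    · exact ((hg ⟨a (d i), ha _⟩).trans (hf (d i))).symm
  rw [hgc, StrongHomClass.realize_formula] at hK
  exact hK hψ

theorem exists_isolatesOverP_of_forall_mem [Countable L.Symbols] (hrel : Relational L)
    {T : L.Theory} (hinf : PInfinite p T) (hcat : RelativelyCatCC p hrel T)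
    {Mbar : Type (max u v)} [L.Structure Mbar] (hMbar : Mbar ⊨ T)
    (M : L.ElementarySubstructure Mbar) {n : ℕ} (y : Fin n → Mbar) (hy : ∀ i, y i ∈ M) :
    ∃ (k : ℕ) (θ : L.Formula (Fin n ⊕ Fin k)) (d : Fin k → Mbar),
      (∀ i, d i ∈ (M : Set Mbar) ∩ Pset p Mbar) ∧ IsolatesOverP p Mbar θ d y := by
  have : Mbar ⊨ T := hMbar
  have := (hinf M inferInstance).to_subtype
  have : Infinite M := Infinite.of_injective (Subtype.val : Pset p M → M) Subtype.val_injective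
  let yM : Fin n → M := fun i => ⟨y i, hy i⟩
  obtain ⟨S, hyS, hS⟩ := exists_countable_elementarySubstructure (L := L) (Set.countable_range yM)
  obtain ⟨k, θ, d, hdP, hθ⟩ := (isolatedOverP_iff p _).1 <|
    atomicOverP_of_relativelyCatCC p hrel hcat inferInstance (hinf S inferInstance).nonempty n
      fun i => ⟨yM i, hyS ⟨i, rfl⟩⟩
  let E : S ↪ₑ[L] Mbar := M.subtype.comp S.subtype
  exact ⟨k, θ, E ∘ d, fun i => ⟨(S.subtype (d i)).2, (E.apply_mem_pset_iff p).2 (hdP i)⟩,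
    hθ.map E⟩

variable {p} in
/-- A witness `x'` in `A` of `∃ y', θ(y', d) ∧ φ(x, y', z)` works for `y` itself: otherwise
`¬ φ(x', ·, z)`, a formula over the `P`-part true of `y`, would hold of `y'`. -/
theorem CompleteSet.exists_realize_of_isolatesOverP {M : Type*} [L.Structure M] {A : Set M}
    (hA : CompleteSet p M A) (hAP : A ⊆ Pset p M) {m k : ℕ} {θ : L.Formula (Fin m ⊕ Fin k)}
    {d : Fin k → M} {y : Fin m → M} (hθ : IsolatesOverP p M θ d y) (hd : ∀ i, d i ∈ A) {l : ℕ}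
    (φ : L.Formula (Fin 1 ⊕ (Fin m ⊕ Fin l))) (z : Fin l → M) (hz : ∀ i, z i ∈ A)
    (hφ : ∃ x ∈ Pset p M, φ.Realize (Sum.elim (fun _ => x) (Sum.elim y z))) :
    ∃ x ∈ A, x ∈ Pset p M ∧ φ.Realize (Sum.elim (fun _ => x) (Sum.elim y z)) := by
  obtain ⟨x, hxP, hx⟩ := hφ
  let Ω : L.Formula (Fin 1 ⊕ (Fin l ⊕ Fin k)) := Formula.iExs (Fin m)
    (θ.relabel (Sum.elim Sum.inr (Sum.inl ∘ Sum.inr ∘ Sum.inr)) ⊓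
      φ.relabel (Sum.elim (Sum.inl ∘ Sum.inl) (Sum.elim Sum.inr (Sum.inl ∘ Sum.inr ∘ Sum.inl))))
  have hΩ : ∀ x, Ω.Realize (Sum.elim (fun _ => x) (Sum.elim z d)) ↔
      ∃ y', θ.Realize (Sum.elim y' d) ∧ φ.Realize (Sum.elim (fun _ => x) (Sum.elim y' z)) := by
    intro x
    simp only [Ω, Formula.realize_iExs, Formula.realize_inf, Formula.realize_relabel,
      Sum.comp_elim, ← Function.comp_assoc, Sum.elim_comp_inl, Sum.elim_comp_inr]
  obtain ⟨x', hx'A, hx'P, hΩx'⟩ := hA.exists_of_finite Ω (Sum.elim z d) (Sum.forall.2 ⟨hz, hd⟩)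
    ⟨x, hxP, (hΩ x).2 ⟨y, hθ.1, hx⟩⟩
  obtain ⟨y', hθy', hφy'⟩ := (hΩ x').1 hΩx'
  refine ⟨x', hx'A, hx'P, ?_⟩
  by_contra hne
  let ψ : L.Formula (Fin m ⊕ (Fin 1 ⊕ Fin l)) :=
    (φ.relabel (Sum.elim (Sum.inr ∘ Sum.inl) (Sum.elim Sum.inl (Sum.inr ∘ Sum.inr)))).not
  have hψ : ∀ y'', ψ.Realize (Sum.elim y'' (Sum.elim (fun _ => x') z)) ↔
      ¬ φ.Realize (Sum.elim (fun _ => x') (Sum.elim y'' z)) := by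
    intro y''
    simp only [ψ, Formula.realize_not, Formula.realize_relabel, Sum.comp_elim,
      ← Function.comp_assoc, Sum.elim_comp_inl, Sum.elim_comp_inr]
  exact (hψ y').1 (hθ.realize_of_finite ψ _ (Sum.forall.2 ⟨fun _ => hx'P, fun i => hAP (hz i)⟩)
    ((hψ y).2 hne) y' hθy') hφy'

theorem union_complete_of_relativelyCatCC_general
    {L : FirstOrder.Language.{u, v}} [Countable L.Symbols]
    (p : L.Relations 1) (hrel : Relational L)
    (T : L.Theory) (hqe : HasQE T) (hinf : PInfinite p T)
    (hcat : RelativelyCatCC p hrel T)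
    (Mbar : Type (max u v)) [L.Structure Mbar] (hMbar : Mbar ⊨ T)
    (M : L.ElementarySubstructure Mbar)
    (N₁ N₂ : L.ElementarySubstructure (Psub p hrel Mbar))
    (h12 : (N₁ : Set (Psub p hrel Mbar)) ⊆ (N₂ : Set (Psub p hrel Mbar)))
    (hMP : (M : Set Mbar) ∩ Pset p Mbar =
      Subtype.val '' (N₁ : Set (Psub p hrel Mbar))) :
    CompleteSet p Mbar
      ((M : Set Mbar) ∪ Subtype.val '' (N₂ : Set (Psub p hrel Mbar))) := by
  rintro n φ c hc ⟨e, heP, he⟩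
  have : Nonempty Mbar := ⟨e⟩
  have : Nonempty (Psub p hrel Mbar) := ⟨⟨e, heP⟩⟩
  obtain ⟨f, y, z, hyM, hzN₂, rfl⟩ := exists_sumElim_comp_eq c hc
    ⟨_, (Classical.arbitrary M).2⟩ ⟨_, _, (Classical.arbitrary N₂).2, rfl⟩
  obtain ⟨k, θ, d, hd, hθ⟩ := exists_isolatesOverP_of_forall_mem p hrel hinf hcat hMbar M y hyM
  have hrealize : ∀ x, (φ.relabel (Sum.map id f)).Realize (Sum.elim (fun _ => x) (Sum.elim y z))
      ↔ φ.Realize (Sum.elim (fun _ => x) (Sum.elim y z ∘ f)) := fun x => by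
    rw [Formula.realize_relabel, Sum.elim_comp_map, Function.comp_id]
  obtain ⟨b, hbN₂, hbP, hb⟩ :=
    (completeSet_image_of_hasQE p hrel hqe hMbar N₂).exists_realize_of_isolatesOverP
      (by rintro _ ⟨x, -, rfl⟩; exact x.2) hθ
      (fun i => Set.image_mono h12 (hMP ▸ hd i)) _ z hzN₂ ⟨e, heP, (hrealize e).2 he⟩
  exact ⟨b, Or.inr hbN₂, hbP, (hrealize b).1 hb⟩

/-- if T is relatively (ω,ω)-categorical, M is a model of T inside a
saturated model, and N₁ ≺ N₂ are models of T^P with N₁ = M^P, then M ∪ N₂ is complete. -/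
theorem union_complete_of_relativelyCatCC
    {L : FirstOrder.Language.{u, v}} [Countable L.Symbols]
    (p : L.Relations 1) (hrel : Relational L)
    (T : L.Theory) (hcomp : T.IsComplete) (hqe : HasQE T) (hinf : PInfinite p T)
    (hcat : RelativelyCatCC p hrel T)
    (Mbar : Type (max u v)) [L.Structure Mbar] (hMbar : Mbar ⊨ T)
    (hsat : IsSaturated (L := L) Mbar)
    (M : L.ElementarySubstructure Mbar)
    (N₁ N₂ : L.ElementarySubstructure (Psub p hrel Mbar))
    (h12 : (N₁ : Set (Psub p hrel Mbar)) ⊆ (N₂ : Set (Psub p hrel Mbar)))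
    (hMP : (M : Set Mbar) ∩ Pset p Mbar =
      Subtype.val '' (N₁ : Set (Psub p hrel Mbar))) :
    CompleteSet p Mbar
      ((M : Set Mbar) ∪ Subtype.val '' (N₂ : Set (Psub p hrel Mbar))) :=
  union_complete_of_relativelyCatCC_general p hrel T hqe hinf hcat Mbar hMbar M N₁ N₂ h12 hMP

end RelCatPaper
end

section
/- Suppose the P-part is stably embedded in T (types over P(M) of tuples in M are uniformly definable over P(M)). Then for any model M of T and models N₁ ≺ N₂ of T^P with N₁ = M^P (inside a saturated model), the set M ∪ N₂ is complete. -/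
/-!
Split the parameters of `φ(x, c)` into a tuple `a` from `M` and a tuple `b` from `P`.
Stable embeddedness, applied in the model `M`, defines `{(x, y) ∈ P(M) | φ(x, a, y)}` by
`χ(x, y, e)` with `e` from `P(M) = N₁ ⊆ N₂`, and `M ≼ Mbar` carries this definition up to
`P(Mbar)`. By quantifier elimination `χ` may be taken quantifier-free, so its truth at tuples from
`P` is decided in the `P`-part, where `N₂ ≼ P(Mbar)` turns the solution `x₀ ∈ P` of `χ(x, b, e)`
into one in `N₂`.
-/

open FirstOrder FirstOrder.Language FirstOrder.Language.Structure

universe u v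

namespace RelCatPaper

variable {L : FirstOrder.Language.{u, v}}

variable (p : L.Relations 1)

theorem exists_comp_eq_of_forall_mem_union {X ι : Type*} {A B : Set X} (hA : A.Nonempty)
    (hB : B.Nonempty) (c : ι → X) (hc : ∀ i, c i ∈ A ∪ B) :
    ∃ (a b : ι → X) (r : ι → ι ⊕ ι), (∀ i, a i ∈ A) ∧ (∀ i, b i ∈ B) ∧ Sum.elim a b ∘ r = c := by
  classical
  refine ⟨fun i => if c i ∈ A then c i else hA.some, fun i => if c i ∈ A then hB.some else c i,
    fun i => if c i ∈ A then .inl i else .inr i, fun i => ?_, fun i => ?_, funext fun i => ?_⟩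
  · dsimp only
    split_ifs with h
    exacts [h, hA.some_mem]
  · dsimp only
    split_ifs with h
    exacts [hB.some_mem, (hc i).resolve_left h]
  · by_cases h : c i ∈ A <;> simp [h]

theorem coe_mem_Pset_iff {X : Type*} [L.Structure X] (S : L.Substructure X) (x : S) :
    (x : X) ∈ Pset p X ↔ x ∈ Pset p S := by
  have h : (Subtype.val ∘ ![x] : Fin 1 → X) = ![(x : X)] := by ext i; fin_cases i; rfl
  show RelMap p ![(x : X)] ↔ RelMap p (Subtype.val ∘ ![x])
  rw [h]

noncomputable def definesOverP {α β γ : Type*} [Finite β] (ψ : L.Formula (α ⊕ β))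
    (χ : L.Formula (β ⊕ γ)) : L.Formula (α ⊕ γ) :=
  Formula.iAlls β <|
    (Formula.iInf fun j : β => p.formula₁ (Term.var (Sum.inr j))).imp
      ((ψ.relabel (Sum.map Sum.inl id)).iff (χ.relabel (Sum.elim Sum.inr (Sum.inl ∘ Sum.inr))))

theorem realize_definesOverP {X α β γ : Type*} [L.Structure X] [Finite β]
    {ψ : L.Formula (α ⊕ β)} {χ : L.Formula (β ⊕ γ)} {a : α → X} {c : γ → X} :
    (definesOverP p ψ χ).Realize (Sum.elim a c) ↔
      ∀ w : β → X, (∀ j, w j ∈ Pset p X) →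
        (ψ.Realize (Sum.elim a w) ↔ χ.Realize (Sum.elim w c)) := by
  simp only [definesOverP, Formula.realize_iAlls, Formula.realize_imp, Formula.realize_iInf,
    Formula.realize_rel₁, Formula.realize_iff, Formula.realize_relabel, Term.realize_var]
  refine forall_congr' fun w => imp_congr Iff.rfl (iff_of_eq ?_)
  congr 2 <;> ext (_ | _) <;> rfl

theorem StablyEmbedded.exists_definition {T : L.Theory} (hse : StablyEmbedded p T)
    {α β : Type*} [Finite α] [Finite β] (ψ : L.Formula (α ⊕ β)) :
    ∃ (n : ℕ) (χ : L.Formula (β ⊕ Fin n)), ∀ (M : Type (max u v)) [L.Structure M], M ⊨ T →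
      ∀ a : α → M, ∃ c : Fin n → M, (∀ i, c i ∈ Pset p M) ∧
        ∀ b : β → M, (∀ i, b i ∈ Pset p M) →
          (ψ.Realize (Sum.elim a b) ↔ χ.Realize (Sum.elim b c)) := by
  obtain ⟨m, ⟨eα⟩⟩ := Finite.exists_equiv_fin α
  obtain ⟨k, ⟨eβ⟩⟩ := Finite.exists_equiv_fin β
  obtain ⟨n, χ, hχ⟩ := hse m k (ψ.relabel (Sum.map eα eβ))
  refine ⟨n, χ.relabel (Sum.map eβ.symm id), fun M _ hM a => ?_⟩
  obtain ⟨c, hcP, hc⟩ := hχ M hM (a ∘ eα.symm)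
  refine ⟨c, hcP, fun b hbP => ?_⟩
  have := hc (b ∘ eβ.symm) fun i => hbP _
  simp only [Formula.realize_relabel] at this ⊢
  convert this using 2 <;> ext (_ | _) <;> simp

theorem StablyEmbedded.exists_definition_of_elementarySubstructure {T : L.Theory}
    (hse : StablyEmbedded p T) {Mbar : Type (max u v)} [L.Structure Mbar] (hMbar : Mbar ⊨ T)
    (M : L.ElementarySubstructure Mbar) {α β : Type*} [Finite α] [Finite β]
    (ψ : L.Formula (α ⊕ β)) {a : α → Mbar} (ha : ∀ i, a i ∈ M) :
    ∃ (n : ℕ) (χ : L.Formula (β ⊕ Fin n)) (c : Fin n → Mbar),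
      (∀ i, c i ∈ (M : Set Mbar) ∩ Pset p Mbar) ∧ ∀ b : β → Mbar, (∀ i, b i ∈ Pset p Mbar) →
        (ψ.Realize (Sum.elim a b) ↔ χ.Realize (Sum.elim b c)) := by
  have : Mbar ⊨ T := hMbar
  obtain ⟨n, χ, hχ⟩ := hse.exists_definition p ψ
  obtain ⟨c, hcP, hc⟩ := hχ M inferInstance fun i => ⟨a i, ha i⟩
  refine ⟨n, χ, Subtype.val ∘ c, fun i => ⟨(c i).2, (coe_mem_Pset_iff p _ _).2 (hcP i)⟩, ?_⟩
  have hdef := (M.subtype.map_formula (definesOverP p ψ χ) (Sum.elim (fun i => ⟨a i, ha i⟩) c)).2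
    ((realize_definesOverP p).2 hc)
  rw [Sum.comp_elim] at hdef
  exact (realize_definesOverP p).1 hdef

theorem StablyEmbedded.exists_realize_iff_of_forall_mem_union {T : L.Theory}
    (hse : StablyEmbedded p T) {Mbar : Type (max u v)} [L.Structure Mbar] (hMbar : Mbar ⊨ T)
    (M : L.ElementarySubstructure Mbar) {B : Set Mbar} (hBP : B ⊆ Pset p Mbar)
    (hB : B.Nonempty) {ι : Type*} [Finite ι] (φ : L.Formula (Fin 1 ⊕ ι)) {c : ι → Mbar}
    (hc : ∀ i, c i ∈ (M : Set Mbar) ∪ B) :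
    ∃ (k : ℕ) (χ : L.Formula (Fin 1 ⊕ (ι ⊕ Fin k))) (d : ι ⊕ Fin k → Mbar),
      (∀ i, d i ∈ B ∪ (M : Set Mbar) ∩ Pset p Mbar) ∧ ∀ x ∈ Pset p Mbar,
        (φ.Realize (Sum.elim (fun _ => x) c) ↔ χ.Realize (Sum.elim (fun _ => x) d)) := by
  have : Nonempty Mbar := hB.to_subtype.map Subtype.val
  have hM : (M : Set Mbar).Nonempty := Set.nonempty_coe_sort.1 (inferInstanceAs (Nonempty M))
  obtain ⟨a, b, r, ha, hb, rfl⟩ := exists_comp_eq_of_forall_mem_union hM hB c hc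
  obtain ⟨k, χ, e, he, hχ⟩ := hse.exists_definition_of_elementarySubstructure p hMbar M
    (φ.relabel (Sum.elim (fun _ => .inr (.inl 0)) (Sum.map id .inr ∘ r) :
      Fin 1 ⊕ ι → ι ⊕ (Fin 1 ⊕ ι))) ha
  refine ⟨k, χ.relabel (Equiv.sumAssoc _ _ _), Sum.elim b e, fun i => ?_, fun x hx => ?_⟩
  · rcases i with i | i
    exacts [Or.inl (hb i), Or.inr (he i)]
  have hxb : ∀ i, Sum.elim (fun _ : Fin 1 => x) b i ∈ Pset p Mbar := by
    rintro (_ | i)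
    exacts [hx, hBP (hb i)]
  rw [Formula.realize_relabel]
  convert hχ _ hxb using 2
  · rw [Formula.realize_relabel]
    refine iff_of_eq (congrArg φ.Realize ?_)
    ext (_ | i)
    · rfl
    · simp only [Sum.elim_inr, Function.comp_apply]
      cases r i <;> rfl
  · ext ((_ | _) | _) <;> rfl

theorem Formula.realize_embedding_of_isQF {M N α : Type*} [L.Structure M] [L.Structure N]
    {φ : L.Formula α} (hφ : φ.IsQF) (f : M ↪[L] N) (v : α → M) :
    φ.Realize (f ∘ v) ↔ φ.Realize v := by
  rw [Formula.Realize, Formula.Realize, ← hφ.realize_embedding f,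
    Subsingleton.elim (f ∘ default) default]

theorem HasQE.exists_realize_in_elementarySubstructure {T : L.Theory} (hqe : HasQE T)
    {Mbar : Type (max u v)} [L.Structure Mbar] (hMbar : Mbar ⊨ T) {S : L.Substructure Mbar}
    (N : L.ElementarySubstructure S) {γ : Type*} [Finite γ] (φ : L.Formula (Fin 1 ⊕ γ))
    {d : γ → Mbar} (hd : ∀ i, d i ∈ Subtype.val '' (N : Set S)) {x : Mbar} (hx : x ∈ S)
    (hφ : φ.Realize (Sum.elim (fun _ => x) d)) :
    ∃ y ∈ Subtype.val '' (N : Set S), φ.Realize (Sum.elim (fun _ => y) d) := by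
  -- `ψ` is quantifier-free, so it holds of a tuple from `N` in `N`, `S` and `Mbar` alike.
  obtain ⟨ψ, hψ, hφψ⟩ := hqe.exists_isQF_iff (φ.relabel Sum.swap)
  have hφψ' : ∀ y, φ.Realize (Sum.elim (fun _ => y) d) ↔ ψ.Realize (Sum.elim d fun _ => y) :=
    fun y => by
      rw [← hφψ Mbar hMbar, Formula.realize_relabel]
      exact iff_of_eq (congrArg _ (by ext (_ | _) <;> rfl))
  choose s hsN hsd using hd
  let dN : γ → N := fun i => ⟨s i, hsN i⟩
  let g : N ↪[L] Mbar := S.subtype.comp N.subtype.toEmbedding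
  have hS : (ψ.iExs (Fin 1)).Realize (Subtype.val ∘ dN) := by
    rw [Formula.realize_iExs]
    refine ⟨fun _ => ⟨x, hx⟩, ?_⟩
    rw [← Formula.realize_embedding_of_isQF hψ S.subtype]
    convert (hφψ' x).1 hφ using 2
    ext (i | _)
    exacts [hsd i, rfl]
  obtain ⟨z, hz⟩ := Formula.realize_iExs.1 ((N.subtype.map_formula _ dN).1 hS)
  refine ⟨g (z 0), ⟨z 0, (z 0).2, rfl⟩, ?_⟩
  rw [hφψ']
  convert (Formula.realize_embedding_of_isQF hψ g _).2 hz using 2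
  ext (i | i)
  exacts [(hsd i).symm, congrArg (g ∘ z) (Subsingleton.elim 0 i)]

theorem union_complete_of_stablyEmbedded_general
    {L : FirstOrder.Language.{u, v}}
    (p : L.Relations 1) (hrel : Relational L)
    (T : L.Theory) (hqe : HasQE T)
    (hse : StablyEmbedded p T)
    (Mbar : Type (max u v)) [L.Structure Mbar] (hMbar : Mbar ⊨ T)
    (M : L.ElementarySubstructure Mbar)
    (N₁ N₂ : L.ElementarySubstructure (Psub p hrel Mbar))
    (h12 : (N₁ : Set (Psub p hrel Mbar)) ⊆ (N₂ : Set (Psub p hrel Mbar)))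
    (hMP : (M : Set Mbar) ∩ Pset p Mbar =
      Subtype.val '' (N₁ : Set (Psub p hrel Mbar))) :
    CompleteSet p Mbar
      ((M : Set Mbar) ∪ Subtype.val '' (N₂ : Set (Psub p hrel Mbar))) := by
  rintro n φ c hc ⟨x₀, hx₀P, hx₀⟩
  have hN₂P : Subtype.val '' (N₂ : Set (Psub p hrel Mbar)) ⊆ Pset p Mbar := by
    rintro _ ⟨y, -, rfl⟩
    exact y.2
  have : Nonempty (Psub p hrel Mbar) := ⟨⟨x₀, hx₀P⟩⟩
  have hN₂ : (N₂ : Set (Psub p hrel Mbar)).Nonempty :=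
    Set.nonempty_coe_sort.1 (inferInstanceAs (Nonempty N₂))
  obtain ⟨k, χ, d, hd, hφχ⟩ :=
    hse.exists_realize_iff_of_forall_mem_union p hMbar M hN₂P (hN₂.image _) φ hc
  have hdN₂ : ∀ i, d i ∈ Subtype.val '' (N₂ : Set (Psub p hrel Mbar)) := fun i =>
    (hd i).elim id fun h => Set.image_mono h12 (hMP ▸ h)
  obtain ⟨y, hy, hyχ⟩ :=
    hqe.exists_realize_in_elementarySubstructure hMbar N₂ χ hdN₂ hx₀P ((hφχ x₀ hx₀P).1 hx₀)
  exact ⟨y, .inr hy, hN₂P hy, (hφχ y (hN₂P hy)).2 hyχ⟩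

/-- if P is stably embedded, M a model of T inside a saturated model,
and N₁ ≺ N₂ models of T^P with N₁ = M^P, then M ∪ N₂ is complete. -/
theorem union_complete_of_stablyEmbedded
    {L : FirstOrder.Language.{u, v}} [Countable L.Symbols]
    (p : L.Relations 1) (hrel : Relational L)
    (T : L.Theory) (hcomp : T.IsComplete) (hqe : HasQE T) (hinf : PInfinite p T)
    (hse : StablyEmbedded p T)
    (Mbar : Type (max u v)) [L.Structure Mbar] (hMbar : Mbar ⊨ T)
    (hsat : IsSaturated (L := L) Mbar)
    (M : L.ElementarySubstructure Mbar)
    (N₁ N₂ : L.ElementarySubstructure (Psub p hrel Mbar))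
    (h12 : (N₁ : Set (Psub p hrel Mbar)) ⊆ (N₂ : Set (Psub p hrel Mbar)))
    (hMP : (M : Set Mbar) ∩ Pset p Mbar =
      Subtype.val '' (N₁ : Set (Psub p hrel Mbar))) :
    CompleteSet p Mbar
      ((M : Set Mbar) ∪ Subtype.val '' (N₂ : Set (Psub p hrel Mbar))) :=
  union_complete_of_stablyEmbedded_general p hrel T hqe hse Mbar hMbar M N₁ N₂ h12 hMP

end RelCatPaper
end

section
/- Suppose T is relatively (ω,ω)-categorical, M is a model of T, a a finite tuple from M, and M₀ ≺ M a countable elementary substructure containing a. If φ(x) over P(M₀) isolates tp(a/P(M₀)), then φ(x) isolates tp(a/P(M)). -/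
/-! If some `ψ(x, d)` with `d ∈ P(M)` held of `a` but not of some realization of `φ(x, c)`, then
`d` would witness an existential formula over `a, c ∈ M₀`; by elementarity such a witness
exists in `P(M₀)`, contradicting that `φ(x, c)` isolates `tp(a/P(M₀))`. -/

open FirstOrder FirstOrder.Language FirstOrder.Language.Structure

universe u v

namespace RelCatPaper

variable {L : FirstOrder.Language.{u, v}}

variable (p : L.Relations 1)

section

variable {M : Type*} [L.Structure M]

theorem exists_forall_mem_realize_of_exists_realize (M₀ : L.ElementarySubstructure M)
    {α β : Type*} [Finite β] (θ : L.Formula (α ⊕ β)) {v : α → M} (hv : ∀ x, v x ∈ M₀)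
    (h : ∃ d : β → M, θ.Realize (Sum.elim v d)) :
    ∃ d : β → M, (∀ i, d i ∈ M₀) ∧ θ.Realize (Sum.elim v d) := by
  let v₀ : α → M₀ := fun x => ⟨v x, hv x⟩
  have hex : (θ.iExs β).Realize v₀ := by
    rw [← M₀.subtype.map_formula, Formula.realize_iExs]
    exact h
  obtain ⟨d₀, hd₀⟩ := Formula.realize_iExs.1 hex
  refine ⟨fun i => d₀ i, fun i => (d₀ i).2, ?_⟩
  have hθ := (M₀.subtype.map_formula θ (Sum.elim v₀ d₀)).2 hd₀
  convert hθ using 2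
  ext (x | i) <;> rfl

theorem exists_forall_mem_inter_Pset_realize (M₀ : L.ElementarySubstructure M)
    {α β : Type*} [Finite β] (θ : L.Formula (α ⊕ β)) {v : α → M} (hv : ∀ x, v x ∈ M₀)
    (h : ∃ d : β → M, (∀ i, d i ∈ Pset p M) ∧ θ.Realize (Sum.elim v d)) :
    ∃ d : β → M, (∀ i, d i ∈ (M₀ : Set M) ∩ Pset p M) ∧ θ.Realize (Sum.elim v d) := by
  let inP : L.Formula (α ⊕ β) := Formula.iInf fun i : β => p.formula₁ (Term.var (Sum.inr i))
  have realize_inP : ∀ d : β → M, inP.Realize (Sum.elim v d) ↔ ∀ i, d i ∈ Pset p M := by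
    intro d
    simp [inP, Pset, Formula.realize_rel₁]
  obtain ⟨d, hd, hinPθ⟩ := exists_forall_mem_realize_of_exists_realize M₀ (inP ⊓ θ) hv
    (h.imp fun d hd => Formula.realize_inf.2 ⟨(realize_inP d).2 hd.1, hd.2⟩)
  rw [Formula.realize_inf, realize_inP] at hinPθ
  exact ⟨d, fun i => ⟨hd i, hinPθ.1 i⟩, hinPθ.2⟩

variable {γ δ β : Type*} [Finite γ]

/-- `ψ(x, y) ∧ ∃ x', φ(x', z) ∧ ¬ψ(x', y)`: the parameters `y` split `φ(x, z)` at `x`. -/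
noncomputable def splitFormula (φ : L.Formula (γ ⊕ δ)) (ψ : L.Formula (γ ⊕ β)) :
    L.Formula ((γ ⊕ δ) ⊕ β) :=
  ψ.relabel (Sum.map Sum.inl id) ⊓
    Formula.iExs γ
      (φ.relabel (Sum.elim Sum.inr (Sum.inl ∘ Sum.inl ∘ Sum.inr)) ⊓
        (ψ.relabel (Sum.elim Sum.inr (Sum.inl ∘ Sum.inr))).not)

theorem realize_splitFormula (φ : L.Formula (γ ⊕ δ)) (ψ : L.Formula (γ ⊕ β))
    (a : γ → M) (c : δ → M) (d : β → M) :
    (splitFormula φ ψ).Realize (Sum.elim (Sum.elim a c) d) ↔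
      ψ.Realize (Sum.elim a d) ∧
        ∃ a' : γ → M, φ.Realize (Sum.elim a' c) ∧ ¬ψ.Realize (Sum.elim a' d) := by
  simp only [splitFormula, Formula.realize_inf, Formula.realize_iExs, Formula.realize_not,
    Formula.realize_relabel]
  refine and_congr (iff_of_eq ?_) (exists_congr fun a' => iff_of_eq ?_)
  · congr 1
    ext (i | i) <;> rfl
  · congr 3 <;> ext (i | i) <;> rfl

end

theorem isolation_transfer_general
    {L : FirstOrder.Language.{u, v}}
    (p : L.Relations 1)
    (M : Type (max u v)) [L.Structure M]
    (M₀ : L.ElementarySubstructure M)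
    {m : ℕ} (a : Fin m → M) (ha : ∀ i, a i ∈ M₀)
    {n : ℕ} (φ : L.Formula (Fin m ⊕ Fin n)) (c : Fin n → M)
    (hc : ∀ i, c i ∈ (M₀ : Set M) ∩ Pset p M)
    (hiso₀ : ∀ (k : ℕ) (ψ : L.Formula (Fin m ⊕ Fin k)) (d : Fin k → M),
      (∀ i, d i ∈ (M₀ : Set M) ∩ Pset p M) → ψ.Realize (Sum.elim a d) →
      ∀ a' : Fin m → M, φ.Realize (Sum.elim a' c) → ψ.Realize (Sum.elim a' d)) :
    ∀ (k : ℕ) (ψ : L.Formula (Fin m ⊕ Fin k)) (d : Fin k → M),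
      (∀ i, d i ∈ Pset p M) → ψ.Realize (Sum.elim a d) →
      ∀ a' : Fin m → M, φ.Realize (Sum.elim a' c) → ψ.Realize (Sum.elim a' d) := by
  intro k ψ d hd hψd a' hφa'
  by_contra hψa'
  have hac : ∀ x, Sum.elim a c x ∈ M₀ := by
    rintro (i | i)
    exacts [ha i, (hc i).1]
  obtain ⟨d₀, hd₀, hsplit⟩ := exists_forall_mem_inter_Pset_realize p M₀ (splitFormula φ ψ) hac
    ⟨d, hd, (realize_splitFormula φ ψ a c d).2 ⟨hψd, a', hφa', hψa'⟩⟩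
  obtain ⟨hψd₀, a'', hφa'', hψa''⟩ := (realize_splitFormula φ ψ a c d₀).1 hsplit
  exact hψa'' (hiso₀ k ψ d₀ hd₀ hψd₀ a'' hφa'')

/-- transfer of isolation from over P(M₀) to over P(M). -/
theorem isolation_transfer
    {L : FirstOrder.Language.{u, v}} [Countable L.Symbols]
    (p : L.Relations 1) (hrel : Relational L)
    (T : L.Theory) (hcomp : T.IsComplete) (hqe : HasQE T) (hinf : PInfinite p T)
    (hcat : RelativelyCatCC p hrel T)
    (M : Type (max u v)) [L.Structure M] (hM : M ⊨ T)
    (M₀ : L.ElementarySubstructure M) (hM₀c : Countable M₀)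
    {m : ℕ} (a : Fin m → M) (ha : ∀ i, a i ∈ M₀)
    {n : ℕ} (φ : L.Formula (Fin m ⊕ Fin n)) (c : Fin n → M)
    (hc : ∀ i, c i ∈ (M₀ : Set M) ∩ Pset p M)
    (hφa : φ.Realize (Sum.elim a c))
    (hiso₀ : ∀ (k : ℕ) (ψ : L.Formula (Fin m ⊕ Fin k)) (d : Fin k → M),
      (∀ i, d i ∈ (M₀ : Set M) ∩ Pset p M) → ψ.Realize (Sum.elim a d) →
      ∀ a' : Fin m → M, φ.Realize (Sum.elim a' c) → ψ.Realize (Sum.elim a' d)) :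
    ∀ (k : ℕ) (ψ : L.Formula (Fin m ⊕ Fin k)) (d : Fin k → M),
      (∀ i, d i ∈ Pset p M) → ψ.Realize (Sum.elim a d) →
      ∀ a' : Fin m → M, φ.Realize (Sum.elim a' c) → ψ.Realize (Sum.elim a' d) :=
  isolation_transfer_general p M M₀ a ha φ c hc hiso₀

end RelCatPaper
end
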